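/- arXiv:2003.09537 — 11 statements merged into one kernel-verified Lean document; each statement's English description precedes it below -/
import Mathlib

section
/- For every join query hypergraph G = (V, E) with |V| = n, every N ≥ 1 and every Δ with 1 ≤ Δ ≤ n, we have CvNum(G, N, Δ) ≤ PrjBnd(G, N, n − Δ + 1). -/
/-- The join output of a join query instance: tuples `t : V → ℕ` whose restriction to
every hyperedge `e ∈ E` belongs to the relation `R e`. -/
def JoinOutput {V : Type*} (E : Finset (Finset V))
    (R : (e : Finset V) → Finset ({v // v ∈ e} → ℕ)) : Set (V → ℕ) :=
  {t | ∀ e ∈ E, (fun v : {v // v ∈ e} => t v.1) ∈ R e}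

/-- The minimum cardinality (in `ℕ∞`) of a join cover of `J` at radius `Δ - 1`. -/
noncomputable def minCoverCard {V : Type*} [Fintype V] (Δ : ℕ) (J : Set (V → ℕ)) : ℕ∞ :=
  ⨅ (C : Set (V → ℕ)) (_ : C ⊆ J ∧ ∀ t ∈ J, ∃ c ∈ C, hammingDist t c < Δ), C.encard

/-- `CvNum G N Δ`: the supremum over all families of relations of size at most `N`
of the minimum cardinality of a join cover of the join output. -/
noncomputable def CvNum {V : Type*} [Fintype V] (E : Finset (Finset V))
    (N Δ : ℕ) : ℕ∞ :=
  ⨆ (R : (e : Finset V) → Finset ({v // v ∈ e} → ℕ)) (_ : ∀ e ∈ E, (R e).card ≤ N),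
    minCoverCard Δ (JoinOutput E R)

/-- The projected join on `S`: tuples `t : S → ℕ` whose restriction to `e ∩ S` lies in
the projection `π_{e ∩ S}(R e)` for every `e ∈ E`. -/
def ProjJoin {V : Type*} (E : Finset (Finset V))
    (R : (e : Finset V) → Finset ({v // v ∈ e} → ℕ)) (S : Finset V) :
    Set ({v // v ∈ S} → ℕ) :=
  {t | ∀ e ∈ E, ∃ r ∈ R e, ∀ (v : V) (hve : v ∈ e) (hvS : v ∈ S), t ⟨v, hvS⟩ = r ⟨v, hve⟩}

/-- `PrjBnd G N s`: the minimum over all `S ⊆ V` with `|S| = s` of the supremum over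
all families of relations of size at most `N` of the cardinality of the projected
join on `S`. -/
noncomputable def PrjBnd {V : Type*} [Fintype V] (E : Finset (Finset V))
    (N s : ℕ) : ℕ∞ :=
  ⨅ (S : Finset V) (_ : S.card = s),
    ⨆ (R : (e : Finset V) → Finset ({v // v ∈ e} → ℕ)) (_ : ∀ e ∈ E, (R e).card ≤ N),
      (ProjJoin E R S).encard

/-!
Fix `S` with `|S| = n - Δ + 1`. For every tuple in the projection of the join output onto `S`
choose one join tuple projecting to it. These representatives form a join cover: any join tuple
agrees with the representative of its projection on `S`, so the two differ in at most
`n - |S| = Δ - 1` coordinates. The cover has at most as many elements as the projection of the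
join output, which is contained in the projected join on `S`.
-/

theorem hammingDist_le_card_sub_of_eqOn {V : Type*} [Fintype V] {β : V → Type*}
    [∀ v, DecidableEq (β v)] {t c : ∀ v, β v} (S : Finset V) (h : ∀ v ∈ S, t v = c v) :
    hammingDist t c ≤ Fintype.card V - S.card := by
  classical
  calc hammingDist t c ≤ Sᶜ.card :=
        Finset.card_le_card fun v hv => Finset.mem_compl.2 fun hvS =>
          (Finset.mem_filter.1 hv).2 (h v hvS)
    _ = Fintype.card V - S.card := Finset.card_compl S

theorem minCoverCard_le_encard_image_restrict {V : Type*} [Fintype V] {Δ : ℕ}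
    (J : Set (V → ℕ)) (S : Finset V) (hS : Fintype.card V - S.card < Δ) :
    minCoverCard Δ J ≤ (S.restrict '' J).encard := by
  set rep := Function.invFunOn S.restrict J
  have rep_mem {p} (hp : p ∈ S.restrict '' J) : rep p ∈ J := Function.invFunOn_mem hp
  have restrict_rep {p} (hp : p ∈ S.restrict '' J) : S.restrict (rep p) = p :=
    Function.invFunOn_eq hp
  have hsub : rep '' (S.restrict '' J) ⊆ J := by
    rintro _ ⟨p, hp, rfl⟩
    exact rep_mem hp
  have hcover : ∀ t ∈ J, ∃ c ∈ rep '' (S.restrict '' J), hammingDist t c < Δ := by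
    intro t ht
    have hp : S.restrict t ∈ S.restrict '' J := ⟨t, ht, rfl⟩
    refine ⟨rep (S.restrict t), ⟨_, hp, rfl⟩, lt_of_le_of_lt ?_ hS⟩
    refine hammingDist_le_card_sub_of_eqOn S fun v hv => ?_
    exact (congrFun (restrict_rep hp) ⟨v, hv⟩).symm
  calc minCoverCard Δ J ≤ (rep '' (S.restrict '' J)).encard := iInf₂_le _ ⟨hsub, hcover⟩
    _ ≤ (S.restrict '' J).encard := Set.encard_image_le _ _

theorem image_restrict_joinOutput_subset_projJoin {V : Type*} (E : Finset (Finset V))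
    (R : (e : Finset V) → Finset ({v // v ∈ e} → ℕ)) (S : Finset V) :
    S.restrict '' JoinOutput E R ⊆ ProjJoin E R S := by
  rintro _ ⟨t, ht, rfl⟩ e he
  exact ⟨fun v => t v.1, ht e he, fun _ _ _ => rfl⟩

theorem cvNum_le_prjBnd_general {V : Type*} [Fintype V]
    (E : Finset (Finset V))
    (n N Δ : ℕ) (hn : Fintype.card V = n) :
    CvNum E N Δ ≤ PrjBnd E N (n - Δ + 1) := by
  refine le_iInf₂ fun S hS => iSup₂_le fun R hR => le_iSup₂_of_le R hR ?_
  have hcompl : Fintype.card V - S.card < Δ := by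
    have := S.card_le_univ
    omega
  calc minCoverCard Δ (JoinOutput E R)
      ≤ (S.restrict '' JoinOutput E R).encard :=
        minCoverCard_le_encard_image_restrict _ S hcompl
    _ ≤ (ProjJoin E R S).encard :=
        Set.encard_mono (image_restrict_joinOutput_subset_projJoin E R S)

/-- For every join query hypergraph `G = (V, E)` with `|V| = n`,
every `N ≥ 1` and every `1 ≤ Δ ≤ n`, `CvNum(G, N, Δ) ≤ PrjBnd(G, N, n - Δ + 1)`. -/
theorem cvNum_le_prjBnd {V : Type*} [Fintype V] [DecidableEq V]
    (E : Finset (Finset V)) (hE : ∀ v : V, ∃ e ∈ E, v ∈ e)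
    (n N Δ : ℕ) (hn : Fintype.card V = n)
    (hN : 1 ≤ N) (hΔ1 : 1 ≤ Δ) (hΔn : Δ ≤ n) :
    CvNum E N Δ ≤ PrjBnd E N (n - Δ + 1) :=
  cvNum_le_prjBnd_general E n N Δ hn
end

section
/- Let n, k be natural numbers with 1 ≤ k ≤ n, and let q : Fin n → ℕ be a strictly increasing sequence of prime numbers. Set M = ∏_{i < k} q i (the product of the k smallest of the primes). If m and m' are natural numbers with m < M, m' < M and m ≠ m', then the number of indices i ∈ Fin n with m ≡ m' (mod q i) is at most k − 1; equivalently, the Chinese Remainder Theorem encodings (m mod q i)_{i ∈ Fin n} and (m' mod q i)_{i ∈ Fin n} have Hamming distance at least n − k + 1. -/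
/-!
If `m ≢ m'` but `m ≡ m' (mod q i)` for `k` of the primes, then the product of those `k` distinct
primes divides the nonzero number `|m - m'|`. Being a product of `k` of the primes, it is at least
the product `M` of the `k` smallest ones, whereas `|m - m'| < M`.
-/

open Finset

lemma Fin.val_le_val_of_strictMono {k n : ℕ} {f : Fin k → Fin n} (hf : StrictMono f)
    (i : Fin k) : (i : ℕ) ≤ f i := by
  simpa only [Fin.card_Iio] using
    card_le_card_of_injOn (s := Iio i) (t := Iio (f i)) f
      (fun j hj => by simpa using hf (by simpa using hj)) hf.injective.injOn

lemma Finset.prod_castLE_le_prod_of_card_eq {M : Type*} [CommMonoid M] [Preorder M]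
    [MulLeftMono M] {k n : ℕ} (hkn : k ≤ n) {q : Fin n → M} (hq : Monotone q)
    {T : Finset (Fin n)} (hT : #T = k) :
    ∏ i : Fin k, q (Fin.castLE hkn i) ≤ ∏ i ∈ T, q i := by
  rw [← T.map_orderEmbOfFin_univ hT, prod_map]
  exact prod_le_prod' fun i _ =>
    hq (Fin.le_iff_val_le_val.mpr (Fin.val_le_val_of_strictMono (T.orderEmbOfFin hT).strictMono i))

lemma Finset.prod_dvd_of_prime_of_injOn {ι M₀ : Type*} [CommMonoidWithZero M₀]
    [IsCancelMulZero M₀] [Subsingleton M₀ˣ] {q : ι → M₀} {T : Finset ι}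
    (hinj : Set.InjOn q T) (hprime : ∀ i ∈ T, Prime (q i)) {d : M₀}
    (hdvd : ∀ i ∈ T, q i ∣ d) :
    ∏ i ∈ T, q i ∣ d := by
  classical
  rw [← prod_image (f := fun p => p) hinj]
  exact prod_primes_dvd d (forall_mem_image.mpr hprime) (forall_mem_image.mpr hdvd)

theorem card_filter_modEq_lt {n k : ℕ} (hkn : k ≤ n) {q : Fin n → ℕ} (hq : StrictMono q)
    (hprime : ∀ i, (q i).Prime) {m m' : ℕ} (hm : m < ∏ i : Fin k, q (Fin.castLE hkn i))
    (hm' : m' < ∏ i : Fin k, q (Fin.castLE hkn i)) (hne : m ≠ m') :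
    #{i | m ≡ m' [MOD q i]} < k := by
  by_contra! hcard
  obtain ⟨T, hTS, hT⟩ := exists_subset_card_eq hcard
  set d := ((m' : ℤ) - m).natAbs
  have hd : 0 < d := Int.natAbs_pos.mpr (by omega)
  have hdvd : ∏ i ∈ T, q i ∣ d :=
    prod_dvd_of_prime_of_injOn hq.injective.injOn (fun i _ => (hprime i).prime)
      fun i hi => Int.natCast_dvd.mp (mem_filter.mp (hTS hi)).2.dvd
  have hle : ∏ i : Fin k, q (Fin.castLE hkn i) ≤ d :=
    (prod_castLE_le_prod_of_card_eq hkn hq.monotone hT).trans (Nat.le_of_dvd hd hdvd)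
  omega

lemma card_filter_eq_add_hammingDist {ι β : Type*} [Fintype ι] [DecidableEq β]
    (x y : ι → β) :
    #{i | x i = y i} + hammingDist x y = Fintype.card ι :=
  card_filter_add_card_filter_not _

theorem crtCode_distance_general (n k : ℕ) (hkn : k ≤ n)
    (q : Fin n → ℕ) (hmono : StrictMono q) (hprime : ∀ i, (q i).Prime)
    (M : ℕ) (hM : M = ∏ i : Fin k, q (Fin.castLE hkn i))
    (m m' : ℕ) (hm : m < M) (hm' : m' < M) (hne : m ≠ m') :
    (Finset.univ.filter fun i : Fin n => m % q i = m' % q i).card ≤ k - 1 ∧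
      n - k + 1 ≤ hammingDist (fun i : Fin n => m % q i) (fun i : Fin n => m' % q i) := by
  subst hM
  have hagree : #{i | m % q i = m' % q i} < k := card_filter_modEq_lt hkn hmono hprime hm hm' hne
  have hsplit := card_filter_eq_add_hammingDist (fun i => m % q i) (fun i => m' % q i)
  rw [Fintype.card_fin] at hsplit
  omega

/-- CRT codes. Let `q : Fin n → ℕ` be a strictly increasing sequence of
primes, `1 ≤ k ≤ n` and `M = ∏_{i < k} q i`. If `m ≠ m'` are both `< M`, then
`m ≡ m' (mod q i)` for at most `k - 1` indices `i`, i.e. the CRT encodings of `m`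
and `m'` have Hamming distance at least `n - k + 1`. -/
theorem crtCode_distance (n k : ℕ) (hk1 : 1 ≤ k) (hkn : k ≤ n)
    (q : Fin n → ℕ) (hmono : StrictMono q) (hprime : ∀ i, (q i).Prime)
    (M : ℕ) (hM : M = ∏ i : Fin k, q (Fin.castLE hkn i))
    (m m' : ℕ) (hm : m < M) (hm' : m' < M) (hne : m ≠ m') :
    (Finset.univ.filter fun i : Fin n => m % q i = m' % q i).card ≤ k - 1 ∧
      n - k + 1 ≤ hammingDist (fun i : Fin n => m % q i) (fun i : Fin n => m' % q i) :=
  crtCode_distance_general n k hkn q hmono hprime M hM m m' hm hm' hne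
end

section
/- Let G be a finite simple graph on vertex set V. Every extreme point y of the fractional matching polytope P(G) is half-integral, i.e., y v ∈ {0, 1/2, 1} for every v ∈ V. -/
/-- The fractional matching polytope of a simple graph `G`: the set of `y : V → ℝ`
with `0 ≤ y v ≤ 1` for all `v` and `y u + y v ≤ 1` whenever `u` and `v` are adjacent. -/
def fracMatchingPolytope {V : Type*} (G : SimpleGraph V) : Set (V → ℝ) :=
  {y | (∀ v, 0 ≤ y v) ∧ (∀ v, y v ≤ 1) ∧ ∀ u v, G.Adj u v → y u + y v ≤ 1}

/-!
Move every coordinate of `y` lying in `(0, 1/2)` down and every coordinate in `(1/2, 1)` up by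
the same amount `t`. A tight edge `y u + y v = 1` pairs a coordinate below `1/2` with one above
it (or two coordinates in `{0, 1/2, 1}`, which do not move), so it stays tight; every other
constraint touching a moving coordinate is slack and, there being finitely many, all of them
survive for `|t|` small. With `χ = halfSign ∘ y`, `y` is the midpoint of `y + t χ` and `y - t χ`
in `P(G)`, so an extreme point has `χ = 0`, which says exactly that `y` is half-integral.
-/

open Filter Topology Set

theorem eq_zero_of_mem_extremePoints_of_eventually_add_smul_mem {E : Type*} [AddCommGroup E]
    [Module ℝ E] {S : Set E} {x d : E} (hx : x ∈ S.extremePoints ℝ)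
    (h : ∀ᶠ t in 𝓝 (0 : ℝ), x + t • d ∈ S) : d = 0 := by
  have h' : ∀ᶠ t in 𝓝 (0 : ℝ), x - t • d ∈ S :=
    (continuous_neg.tendsto' 0 0 neg_zero).eventually h |>.mono fun t ht => by
      simpa [neg_smul, ← sub_eq_add_neg] using ht
  obtain ⟨t, ⟨hadd, hsub⟩, ht⟩ :=
    (((h.and h').filter_mono nhdsWithin_le_nhds).and self_mem_nhdsWithin).exists
      (f := 𝓝[≠] (0 : ℝ))
  have : t • d = 0 := by
    simpa using hx.2 hadd hsub (mem_openSegment_add_sub x (t • d))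
  exact (smul_eq_zero.1 this).resolve_left ht

theorem eventually_add_mul_mem {s : Set ℝ} (hs : IsOpen s) {a : ℝ} (ha : a ∈ s) (b : ℝ) :
    ∀ᶠ t in 𝓝 (0 : ℝ), a + t * b ∈ s :=
  (continuous_const.add (continuous_id.mul continuous_const)).tendsto' 0 a (by simp)
    |>.eventually (hs.mem_nhds ha)

noncomputable def halfSign (x : ℝ) : ℝ :=
  if x ∈ Ioo 0 1 then Real.sign (x - 1 / 2) else 0

theorem halfSign_one_sub (x : ℝ) : halfSign (1 - x) = -halfSign x := by
  have hmem : 1 - x ∈ Ioo (0 : ℝ) 1 ↔ x ∈ Ioo 0 1 := by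
    simp only [mem_Ioo]; constructor <;> intro h <;> constructor <;> linarith [h.1, h.2]
  unfold halfSign
  rw [if_congr hmem rfl rfl, show 1 - x - 1 / 2 = -(x - 1 / 2) by ring, Real.sign_neg]
  split_ifs <;> simp

theorem mem_Ioo_of_halfSign_ne_zero {x : ℝ} (hx : halfSign x ≠ 0) : x ∈ Ioo 0 1 := by
  by_contra h
  exact hx (if_neg h)

theorem eq_zero_or_eq_half_or_eq_one_of_halfSign_eq_zero {x : ℝ} (hx : halfSign x = 0)
    (h0 : 0 ≤ x) (h1 : x ≤ 1) : x = 0 ∨ x = 1 / 2 ∨ x = 1 := by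
  unfold halfSign at hx
  split_ifs at hx with h
  · exact Or.inr (Or.inl (sub_eq_zero.1 (Real.sign_eq_zero_iff.1 hx)))
  · simp only [mem_Ioo, not_and_or, not_lt] at h
    rcases h with h | h
    · exact Or.inl (le_antisymm h h0)
    · exact Or.inr (Or.inr (le_antisymm h1 h))

theorem eventually_add_smul_halfSign_mem_fracMatchingPolytope {V : Type*} [Finite V]
    {G : SimpleGraph V} {y : V → ℝ} (hy : y ∈ fracMatchingPolytope G) :
    ∀ᶠ t in 𝓝 (0 : ℝ), y + t • (halfSign ∘ y) ∈ fracMatchingPolytope G := by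
  obtain ⟨h0, h1, hE⟩ := hy
  have hbox : ∀ v, ∀ᶠ t in 𝓝 (0 : ℝ), y v + t * halfSign (y v) ∈ Icc 0 1 := by
    intro v
    by_cases hv : halfSign (y v) = 0
    · exact .of_forall fun t => by simpa [hv] using ⟨h0 v, h1 v⟩
    · exact (eventually_add_mul_mem isOpen_Ioo (mem_Ioo_of_halfSign_ne_zero hv) _).mono
        fun _ ht => Ioo_subset_Icc_self ht
  have hedge : ∀ u v, G.Adj u v → ∀ᶠ t in 𝓝 (0 : ℝ),
      y u + t * halfSign (y u) + (y v + t * halfSign (y v)) ≤ 1 := by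
    intro u v huv
    rcases (hE u v huv).lt_or_eq with hlt | htight
    · exact (eventually_add_mul_mem isOpen_Iio hlt (halfSign (y u) + halfSign (y v))).mono
        fun t ht => by simp only [mem_Iio] at ht; linarith
    · have : halfSign (y v) = -halfSign (y u) := by
        rw [← halfSign_one_sub, ← htight, add_sub_cancel_left]
      exact .of_forall fun t => by rw [this]; linarith
  have hbox' := eventually_all.2 hbox
  have hedge' := eventually_all.2 fun u => eventually_all.2 fun v =>
    eventually_imp_distrib_left.2 (hedge u v)
  filter_upwards [hbox', hedge'] with t hb he
  exact ⟨fun v => (hb v).1, fun v => (hb v).2, he⟩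

/-- every extreme point of the fractional matching polytope of a finite
simple graph is half-integral. -/
theorem fracMatching_extremePoint_halfIntegral {V : Type*} [Fintype V]
    (G : SimpleGraph V) (y : V → ℝ)
    (hy : y ∈ Set.extremePoints ℝ (fracMatchingPolytope G)) :
    ∀ v, y v = 0 ∨ y v = 1 / 2 ∨ y v = 1 := by
  have hzero : halfSign ∘ y = 0 :=
    eq_zero_of_mem_extremePoints_of_eventually_add_smul_mem hy
      (eventually_add_smul_halfSign_mem_fracMatchingPolytope hy.1)
  intro v
  exact eq_zero_or_eq_half_or_eq_one_of_halfSign_eq_zero (congrFun hzero v) (hy.1.1 v)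
    (hy.1.2.1 v)
end

section
/- Let G be a finite simple graph on vertex set V. There exists y ∈ P(G) with y v ∈ {0, 1/2, 1} for every v ∈ V such that ∑_{v ∈ V} y v equals the maximum of ∑_{v ∈ V} z v over all z ∈ P(G); i.e., the fractional matching linear program max ∑_v y_v over P(G) has a half-integral optimal solution. -/
open Finset

abbrev halfIntegralValues : Set ℝ := {0, 1 / 2, 1}

theorem mem_halfIntegralValues_iff {x : ℝ} :
    x ∈ halfIntegralValues ↔ |x - 1 / 2| = 0 ∨ |x - 1 / 2| = 1 / 2 := by
  simp only [halfIntegralValues, Set.mem_insert_iff, Set.mem_singleton_iff]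
  constructor
  · rintro (rfl | rfl | rfl) <;> norm_num
  · rintro (h | h)
    · exact Or.inr (Or.inl (by linarith [abs_eq_zero.1 h]))
    · rcases (abs_eq (by norm_num)).1 h with h' | h'
      · exact Or.inr (Or.inr (by linarith))
      · exact Or.inl (by linarith)

section SymmetricMaps

variable {φ : ℝ → ℝ}

theorem comp_mem_fracMatchingPolytope {V : Type*} {G : SimpleGraph V} (hφ : Monotone φ)
    (hsymm : ∀ x, φ (1 - x) = 1 - φ x) (h0 : 0 ≤ φ 0) {y : V → ℝ}
    (hy : y ∈ fracMatchingPolytope G) : φ ∘ y ∈ fracMatchingPolytope G := by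
  obtain ⟨hy0, hy1, hadj⟩ := hy
  have h1 : φ 1 ≤ 1 := by
    have := hsymm 0
    rw [sub_zero] at this
    linarith
  refine ⟨fun v => h0.trans (hφ (hy0 v)), fun v => (hφ (hy1 v)).trans h1, fun u v huv => ?_⟩
  have := hφ (le_sub_iff_add_le.2 (hadj u v huv))
  simp only [Function.comp_apply, hsymm] at this ⊢
  linarith

theorem apply_eq_self_of_mem_halfIntegralValues (hsymm : ∀ x, φ (1 - x) = 1 - φ x)
    (h0 : φ 0 = 0) {x : ℝ} (hx : x ∈ halfIntegralValues) : φ x = x := by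
  have h1 := hsymm 0
  have hhalf := hsymm (1 / 2)
  rcases hx with rfl | rfl | rfl
  · exact h0
  · norm_num at hhalf; linarith
  · norm_num at h1; linarith

end SymmetricMaps

section Stretch

-- The outer cases keep `0` and `1` fixed also when `c = 0`.
noncomputable def stretch (c x : ℝ) : ℝ :=
  if x ≤ 0 then 0 else if 1 ≤ x then 1 else max 0 (min 1 (1 / 2 + c * (x - 1 / 2)))

variable {c : ℝ}

theorem stretch_monotone (hc : 0 ≤ c) : Monotone (stretch c) := by
  intro a b hab
  unfold stretch
  have hscale : c * (a - 1 / 2) ≤ c * (b - 1 / 2) := by gcongr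
  split_ifs <;> first
    | linarith
    | exact le_max_left _ _
    | exact max_le zero_le_one (min_le_left _ _)
    | exact max_le_max le_rfl (min_le_min le_rfl (by linarith))

theorem stretch_one_sub (c x : ℝ) : stretch c (1 - x) = 1 - stretch c x := by
  unfold stretch
  have hlin : 1 / 2 + c * (1 - x - 1 / 2) = 1 - (1 / 2 + c * (x - 1 / 2)) := by ring
  rw [hlin]
  split_ifs <;> first
    | linarith
    | simp only [max_def, min_def]; split_ifs <;> linarith

theorem stretch_zero_right (c : ℝ) : stretch c 0 = 0 := if_pos le_rfl

theorem stretch_sub_half {x : ℝ} (hx : |x - 1 / 2| < 1 / 2)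
    (hc : |c * (x - 1 / 2)| ≤ 1 / 2) : stretch c x - 1 / 2 = c * (x - 1 / 2) := by
  rw [abs_lt] at hx
  rw [abs_le] at hc
  simp only [stretch, if_neg (show ¬x ≤ 0 by linarith), if_neg (show ¬1 ≤ x by linarith)]
  rw [min_eq_right (by linarith), max_eq_right (by linarith)]
  ring

theorem stretch_of_mem_halfIntegralValues (c : ℝ) {x : ℝ} (hx : x ∈ halfIntegralValues) :
    stretch c x = x :=
  apply_eq_self_of_mem_halfIntegralValues (stretch_one_sub c) (stretch_zero_right c) hx

theorem stretch_comp_mem_fracMatchingPolytope {V : Type*} {G : SimpleGraph V} (hc : 0 ≤ c)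
    {y : V → ℝ} (hy : y ∈ fracMatchingPolytope G) : stretch c ∘ y ∈ fracMatchingPolytope G :=
  comp_mem_fracMatchingPolytope (stretch_monotone hc) (stretch_one_sub c)
    (stretch_zero_right c).ge hy

end Stretch

section Rounding

variable {V : Type*} [Fintype V] {G : SimpleGraph V}

open Classical in
noncomputable def nonHalfIntegralVertices (y : V → ℝ) : Finset V :=
  {v | y v ∉ halfIntegralValues}

theorem mem_nonHalfIntegralVertices {y : V → ℝ} {v : V} :
    v ∈ nonHalfIntegralVertices y ↔ y v ∉ halfIntegralValues := by
  simp [nonHalfIntegralVertices]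

theorem abs_sub_half_mem_Ioo_of_mem_nonHalfIntegralVertices {z : V → ℝ}
    (hz : z ∈ fracMatchingPolytope G) {v : V} (hv : v ∈ nonHalfIntegralVertices z) :
    |z v - 1 / 2| ∈ Set.Ioo 0 (1 / 2) := by
  rw [mem_nonHalfIntegralVertices, mem_halfIntegralValues_iff, not_or] at hv
  have hle : |z v - 1 / 2| ≤ 1 / 2 := abs_le.2 ⟨by linarith [hz.1 v], by linarith [hz.2.1 v]⟩
  exact ⟨(abs_nonneg _).lt_of_ne' hv.1, hle.lt_of_ne hv.2⟩

theorem nonHalfIntegralVertices_stretch_comp_subset (c : ℝ) (z : V → ℝ) :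
    nonHalfIntegralVertices (stretch c ∘ z) ⊆ nonHalfIntegralVertices z := by
  intro v hv
  rw [mem_nonHalfIntegralVertices] at hv ⊢
  intro hz
  rw [Function.comp_apply, stretch_of_mem_halfIntegralValues c hz] at hv
  exact hv hz

theorem sum_stretch_comp {z : V → ℝ} (hz : z ∈ fracMatchingPolytope G) {c : ℝ}
    (hc : ∀ v ∈ nonHalfIntegralVertices z, |c * (z v - 1 / 2)| ≤ 1 / 2) :
    ∑ v, stretch c (z v) =
      ∑ v, z v + (c - 1) * ∑ v ∈ nonHalfIntegralVertices z, (z v - 1 / 2) := by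
  have hoff : ∀ v ∉ nonHalfIntegralVertices z, stretch c (z v) - z v = 0 := fun v hv =>
    sub_eq_zero.2 <| stretch_of_mem_halfIntegralValues c <|
      not_not.1 (mt mem_nonHalfIntegralVertices.2 hv)
  have hdiff : ∑ v, (stretch c (z v) - z v) =
      (c - 1) * ∑ v ∈ nonHalfIntegralVertices z, (z v - 1 / 2) := by
    rw [← sum_subset (subset_univ _) fun v _ hv => hoff v hv, mul_sum]
    refine sum_congr rfl fun v hv => ?_
    have hv' := (abs_sub_half_mem_Ioo_of_mem_nonHalfIntegralVertices hz hv).2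
    linarith [stretch_sub_half hv' (hc v hv)]
  rw [sum_sub_distrib] at hdiff
  linarith

theorem exists_sum_le_of_nonHalfIntegralVertices_nonempty {z : V → ℝ}
    (hz : z ∈ fracMatchingPolytope G) (hB : (nonHalfIntegralVertices z).Nonempty) :
    ∃ z' ∈ fracMatchingPolytope G, ∑ v, z v ≤ ∑ v, z' v ∧
      #(nonHalfIntegralVertices z') < #(nonHalfIntegralVertices z) := by
  set B := nonHalfIntegralVertices z
  obtain ⟨v₀, hv₀, hmax⟩ := B.exists_max_image (fun v => |z v - 1 / 2|) hB
  set m := |z v₀ - 1 / 2|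
  obtain ⟨hm0, hm1⟩ : 0 < m ∧ m < 1 / 2 :=
    abs_sub_half_mem_Ioo_of_mem_nonHalfIntegralVertices hz hv₀
  set e := ∑ v ∈ B, (z v - 1 / 2)
  -- Collapse `B` to `1/2` if that does not lose mass, otherwise push `v₀` to `0` or `1`.
  set c : ℝ := if e ≤ 0 then 0 else 1 / (2 * m)
  have hc0 : 0 ≤ c := by unfold c; split_ifs <;> positivity
  have hcm : c * m = 0 ∨ c * m = 1 / 2 := by
    unfold c; split_ifs
    · simp
    · right; field_simp
  have hgain : 0 ≤ (c - 1) * e := by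
    unfold c; split_ifs with he
    · linarith
    · have : 1 ≤ 1 / (2 * m) := by rw [le_div_iff₀ (by positivity)]; linarith
      nlinarith
  have habs : ∀ v, |c * (z v - 1 / 2)| = c * |z v - 1 / 2| := fun v => by
    rw [abs_mul, abs_of_nonneg hc0]
  have hcB : ∀ v ∈ B, |c * (z v - 1 / 2)| ≤ 1 / 2 := fun v hv => by
    rw [habs]
    rcases hcm with h | h <;> nlinarith [hmax v hv]
  refine ⟨stretch c ∘ z, stretch_comp_mem_fracMatchingPolytope hc0 hz, ?_,
    card_lt_card ⟨nonHalfIntegralVertices_stretch_comp_subset c z, fun hsub => ?_⟩⟩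
  · simp only [Function.comp_apply, sum_stretch_comp hz hcB]
    linarith
  · refine mem_nonHalfIntegralVertices.1 (hsub hv₀) (mem_halfIntegralValues_iff.2 ?_)
    rw [Function.comp_apply, stretch_sub_half hm1 (hcB v₀ hv₀), habs]
    exact hcm

theorem exists_halfIntegral_sum_le {z : V → ℝ} (hz : z ∈ fracMatchingPolytope G) :
    ∃ y ∈ fracMatchingPolytope G, (∀ v, y v ∈ halfIntegralValues) ∧ ∑ v, z v ≤ ∑ v, y v := by
  induction hn : #(nonHalfIntegralVertices z) using Nat.strong_induction_on generalizing z with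
  | _ n ih =>
    obtain hB | hB := (nonHalfIntegralVertices z).eq_empty_or_nonempty
    · refine ⟨z, hz, fun v => ?_, le_rfl⟩
      by_contra hv
      exact notMem_empty v (hB ▸ mem_nonHalfIntegralVertices.2 hv)
    · obtain ⟨z', hz', hle, hlt⟩ := exists_sum_le_of_nonHalfIntegralVertices_nonempty hz hB
      obtain ⟨y, hy, hyhalf, hle'⟩ := ih _ (hn ▸ hlt) hz' rfl
      exact ⟨y, hy, hyhalf, hle.trans hle'⟩

end Rounding

/-- the fractional matching linear program `max ∑ v, y v` over the
fractional matching polytope of a finite simple graph has a half-integral optimal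
solution. -/
theorem fracMatching_halfIntegral_optimal {V : Type*} [Fintype V] (G : SimpleGraph V) :
    ∃ y ∈ fracMatchingPolytope G, (∀ v, y v = 0 ∨ y v = 1 / 2 ∨ y v = 1) ∧
      ∀ z ∈ fracMatchingPolytope G, ∑ v, z v ≤ ∑ v, y v := by
  set H := {y | y ∈ fracMatchingPolytope G ∧ ∀ v, y v ∈ halfIntegralValues}
  have hfin : H.Finite :=
    (Set.Finite.pi fun _ => Set.toFinite halfIntegralValues).subset
      fun y hy => Set.mem_univ_pi.2 hy.2
  have hzero : (0 : V → ℝ) ∈ H :=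
    ⟨⟨fun _ => le_rfl, fun _ => zero_le_one, fun _ _ _ => by norm_num⟩, fun _ => Or.inl rfl⟩
  obtain ⟨y, ⟨hy, hyhalf⟩, hmax⟩ := H.exists_max_image (fun y => ∑ v, y v) hfin ⟨0, hzero⟩
  refine ⟨y, hy, hyhalf, fun z hz => ?_⟩
  obtain ⟨y', hy', hy'half, hle⟩ := exists_halfIntegral_sum_le hz
  exact hle.trans (hmax y' ⟨hy', hy'half⟩)
end

section
/- Let G be a finite simple graph on vertex set V and let y ∈ P(G) be half-integral and maximize ∑_{v ∈ V} y v over P(G). Then there exists an injective map f from the set Z = {v ∈ V : y v = 0} to the set O = {u ∈ V : y u = 1} such that for every v ∈ Z, the vertex v is adjacent to f v in G. In other words, every vertex with value 0 can be uniquely matched along an edge of G to a distinct vertex with value 1. -/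
open Finset

section HalfReset

variable {V : Type*} [DecidableEq V]

theorem piecewise_half_mem_fracMatchingPolytope {G : SimpleGraph V} {y : V → ℝ}
    (hy : y ∈ fracMatchingPolytope G) {A : Finset V}
    (hA : ∀ u ∈ A, ∀ v, G.Adj u v → v ∉ A → y v ≤ 1 / 2) :
    A.piecewise (fun _ => 1 / 2) y ∈ fracMatchingPolytope G := by
  obtain ⟨hy0, hy1, hyadj⟩ := hy
  refine ⟨fun v => ?_, fun v => ?_, fun u v huv => ?_⟩
  · by_cases hv : v ∈ A <;> simp [hv, hy0 v]
  · by_cases hv : v ∈ A <;> norm_num [hv, hy1 v]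
  · by_cases hu : u ∈ A <;> by_cases hv : v ∈ A
    · norm_num [hu, hv]
    · simp only [piecewise_eq_of_mem _ _ _ hu, piecewise_eq_of_notMem _ _ _ hv]
      linarith [hA u hu v huv hv]
    · simp only [piecewise_eq_of_notMem _ _ _ hu, piecewise_eq_of_mem _ _ _ hv]
      linarith [hA v hv u huv.symm hu]
    · simpa [hu, hv] using hyadj u v huv

theorem sum_piecewise_eq_sum_add [Fintype V] (A : Finset V) (f y : V → ℝ) :
    ∑ v, A.piecewise f y v = ∑ v, y v + ∑ v ∈ A, (f v - y v) := by
  rw [← sum_inter_add_sum_sdiff univ A y, sum_piecewise, univ_inter, sum_sub_distrib]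
  ring

end HalfReset

theorem card_le_card_of_halfIntegral_optimal {V : Type*} [Fintype V] [DecidableEq V]
    {G : SimpleGraph V} {y : V → ℝ} (hy : y ∈ fracMatchingPolytope G)
    (hhalf : ∀ v, y v = 0 ∨ y v = 1 / 2 ∨ y v = 1)
    (hopt : ∀ z ∈ fracMatchingPolytope G, ∑ v, z v ≤ ∑ v, y v)
    {S T : Finset V} (hS : ∀ v ∈ S, y v = 0) (hT : ∀ v ∈ T, y v = 1)
    (hST : ∀ u ∈ S, ∀ v, G.Adj u v → y v = 1 → v ∈ T) : #S ≤ #T := by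
  have hdisj : Disjoint S T :=
    disjoint_left.mpr fun v hvS hvT => by linarith [hS v hvS, hT v hvT]
  have hfeas : (S ∪ T).piecewise (fun _ => 1 / 2) y ∈ fracMatchingPolytope G := by
    refine piecewise_half_mem_fracMatchingPolytope hy fun u hu v huv hv => ?_
    rcases mem_union.mp hu with huS | huT
    · have hv1 : y v ≠ 1 := fun h => hv (mem_union_right S (hST u huS v huv h))
      rcases hhalf v with h | h | h <;> first | linarith | exact absurd h hv1
    · linarith [hy.2.2 u v huv, hy.1 v, hT u huT]
  have hgain : ∑ v ∈ S ∪ T, (1 / 2 - y v) = ((#S : ℝ) - #T) / 2 := by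
    rw [sum_union hdisj, sum_eq_card_nsmul fun v hv => by rw [hS v hv],
      sum_eq_card_nsmul fun v hv => by rw [hT v hv], nsmul_eq_mul, nsmul_eq_mul]
    ring
  have := hopt _ hfeas
  rw [sum_piecewise_eq_sum_add, hgain] at this
  exact_mod_cast (by linarith : (#S : ℝ) ≤ #T)

/-- if `y` is a half-integral optimal solution of the fractional matching
LP on a finite simple graph `G`, then there is an injection from the vertices of value
`0` to the vertices of value `1` matching each `0`-vertex to an adjacent `1`-vertex. -/
theorem fracMatching_zero_matched_to_one {V : Type*} [Fintype V]
    (G : SimpleGraph V) (y : V → ℝ)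
    (hy : y ∈ fracMatchingPolytope G)
    (hhalf : ∀ v, y v = 0 ∨ y v = 1 / 2 ∨ y v = 1)
    (hopt : ∀ z ∈ fracMatchingPolytope G, ∑ v, z v ≤ ∑ v, y v) :
    ∃ f : {v : V // y v = 0} → {u : V // y u = 1},
      Function.Injective f ∧ ∀ v, G.Adj v.1 (f v).1 := by
  classical
  let t : {v : V // y v = 0} → Finset {u : V // y u = 1} :=
    fun v => univ.filter fun u => G.Adj v u
  have hall (s : Finset {v : V // y v = 0}) : #s ≤ #(s.biUnion t) := by
    simpa using card_le_card_of_halfIntegral_optimal hy hhalf hopt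
      (S := s.map (.subtype _)) (T := (s.biUnion t).map (.subtype _))
      (by simp +contextual) (by simp +contextual)
      (by simp +contextual [t]; exact fun u hu hus v huv _ => ⟨u, ⟨hu, hus⟩, huv⟩)
  obtain ⟨f, hinj, hf⟩ := (all_card_le_biUnion_card_iff_exists_injective t).mp hall
  exact ⟨f, hinj, fun v => (mem_filter.mp (hf v)).2⟩
end

section
/- Let G be a finite simple graph on vertex set V and let y ∈ P(G) be half-integral and maximize ∑_{v ∈ V} y v over P(G). Let A = {v ∈ V : y v = 1/2} and let G[A] be the induced subgraph of G on A. Then the maximum of ∑_{v ∈ A} z v over all z ∈ P(G[A]) equals |A| / 2; that is, assigning 1/2 to every vertex of A is an optimal solution of the fractional matching linear program on G[A]. -/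
open scoped Classical

/-!
Extend any `z ∈ P(G[A])` by `y` outside `A`. A neighbour `v ∉ A` of a vertex `u ∈ A` has
`y v ≤ 1 - y u = 1/2` and `y v ≠ 1/2`, so half-integrality forces `y v = 0`; hence the extension
lies in `P(G)`, and comparing it with the optimal `y` gives
`∑_{v ∈ A} z v ≤ ∑_{v ∈ A} y v = |A| / 2`.
-/

open Function

namespace SimpleGraph

variable {V : Type*} (G : SimpleGraph V)

lemma const_half_mem_fracMatchingPolytope : (fun _ ↦ 1 / 2 : V → ℝ) ∈ fracMatchingPolytope G :=
  ⟨fun _ ↦ by norm_num, fun _ ↦ by norm_num, fun _ _ _ ↦ by norm_num⟩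

variable {G}

lemma eq_zero_of_adj_of_eq_half {y : V → ℝ} (hy : y ∈ fracMatchingPolytope G)
    (hhalf : ∀ v, y v = 0 ∨ y v = 1 / 2 ∨ y v = 1) {u v : V} (huv : G.Adj u v)
    (hu : y u = 1 / 2) (hv : y v ≠ 1 / 2) : y v = 0 := by
  have := hy.2.2 u v huv
  rcases hhalf v with h | h | h
  · exact h
  · exact absurd h hv
  · linarith

lemma extend_val_mem_fracMatchingPolytope {A : Set V} {z : A → ℝ} {y : V → ℝ}
    (hz : z ∈ fracMatchingPolytope (G.induce A)) (hy : y ∈ fracMatchingPolytope G)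
    (hzero : ∀ u ∈ A, ∀ v ∉ A, G.Adj u v → y v = 0) :
    extend Subtype.val z y ∈ fracMatchingPolytope G := by
  obtain ⟨hz0, hz1, hzadj⟩ := hz
  obtain ⟨hy0, hy1, hyadj⟩ := hy
  have hin : ∀ v (h : v ∈ A), extend Subtype.val z y v = z ⟨v, h⟩ := fun v h ↦
    Subtype.val_injective.extend_apply z y ⟨v, h⟩
  have hout : ∀ v ∉ A, extend Subtype.val z y v = y v := fun v h ↦
    extend_apply' z y v fun ⟨a, ha⟩ ↦ h (ha ▸ a.2)
  refine ⟨fun v ↦ ?_, fun v ↦ ?_, fun u v huv ↦ ?_⟩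
  · by_cases h : v ∈ A
    · rw [hin v h]; exact hz0 _
    · rw [hout v h]; exact hy0 v
  · by_cases h : v ∈ A
    · rw [hin v h]; exact hz1 _
    · rw [hout v h]; exact hy1 v
  · by_cases hu : u ∈ A <;> by_cases hv : v ∈ A
    · rw [hin u hu, hin v hv]; exact hzadj ⟨u, hu⟩ ⟨v, hv⟩ huv
    · rw [hin u hu, hout v hv, hzero u hu v hv huv]; linarith [hz1 ⟨u, hu⟩]
    · rw [hout u hu, hin v hv, hzero v hv u hu huv.symm]; linarith [hz1 ⟨v, hv⟩]
    · rw [hout u hu, hout v hv]; exact hyadj u v huv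

lemma sum_le_sum_of_extend_val_mem [Fintype V] {y : V → ℝ}
    (hopt : ∀ z ∈ fracMatchingPolytope G, ∑ v, z v ≤ ∑ v, y v)
    {A : Set V} [DecidablePred (· ∈ A)] {z : A → ℝ}
    (hext : extend Subtype.val z y ∈ fracMatchingPolytope G) :
    ∑ a, z a ≤ ∑ a : A, y a := by
  have hout : ∀ v : {v // v ∉ A}, extend Subtype.val z y v = y v := fun v ↦
    extend_apply' z y v fun ⟨a, ha⟩ ↦ v.2 (ha ▸ a.2)
  have := hopt _ hext
  rw [← Fintype.sum_subtype_add_sum_subtype (· ∈ A),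
    ← Fintype.sum_subtype_add_sum_subtype (· ∈ A) y, Fintype.sum_congr _ _ hout] at this
  simpa only [Subtype.val_injective.extend_apply, add_le_add_iff_right] using this

end SimpleGraph

open SimpleGraph

/-- if `y` is a half-integral optimal solution of the fractional matching
LP on a finite simple graph `G` and `A = {v | y v = 1/2}`, then the optimum of the
fractional matching LP on the induced subgraph `G[A]` equals `|A| / 2`. -/
theorem fracMatching_half_vertices_optimal {V : Type*} [Fintype V]
    (G : SimpleGraph V) (y : V → ℝ)
    (hy : y ∈ fracMatchingPolytope G)
    (hhalf : ∀ v, y v = 0 ∨ y v = 1 / 2 ∨ y v = 1)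
    (hopt : ∀ z ∈ fracMatchingPolytope G, ∑ v, z v ≤ ∑ v, y v)
    (A : Set V) (hA : A = {v | y v = 1 / 2}) :
    IsGreatest ((fun z : ↥A → ℝ => ∑ v, z v) '' fracMatchingPolytope (G.induce A))
      ((A.ncard : ℝ) / 2) := by
  have hyA : ∀ a : A, y a = 1 / 2 := fun a ↦ by simpa only [hA, Set.mem_ofPred_eq] using a.2
  have hsum : ∑ _a : A, (1 / 2 : ℝ) = A.ncard / 2 := by
    rw [Finset.sum_const, Finset.card_univ, ← Nat.card_eq_fintype_card, Nat.card_coe_set_eq,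
      nsmul_eq_mul, mul_one_div]
  refine ⟨⟨_, const_half_mem_fracMatchingPolytope _, hsum⟩, ?_⟩
  rintro _ ⟨z, hz, rfl⟩
  have hzero : ∀ u ∈ A, ∀ v ∉ A, G.Adj u v → y v = 0 := fun u hu v hv huv ↦
    eq_zero_of_adj_of_eq_half hy hhalf huv (hyA ⟨u, hu⟩)
      (by simpa only [hA, Set.mem_ofPred_eq] using hv)
  calc ∑ a, z a ≤ ∑ a : A, y a :=
        sum_le_sum_of_extend_val_mem hopt (extend_val_mem_fracMatchingPolytope hz hy hzero)
    _ = A.ncard / 2 := by rw [← hsum]; exact Fintype.sum_congr _ _ hyA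
end

section
/- Let G be a finite simple graph on vertex set V and let y ∈ P(G) be half-integral and maximize ∑_{v ∈ V} y v over P(G). Let A = {v ∈ V : y v = 1/2} and B = V \ A. If M_c is a maximum matching of the induced subgraph G[A] and M_s is a maximum matching of the induced subgraph G[B], then M_c ∪ M_s is a maximum matching of G; in particular, the matching number of G equals the matching number of G[A] plus the matching number of G[B]. -/
/-- `M` is a matching of the subgraph of `G` induced on `A`: a set of edges of `G`
with all endpoints in `A`, pairwise vertex-disjoint. -/
def IsMatchingOn {V : Type*} (G : SimpleGraph V) (A : Set V) (M : Finset (Sym2 V)) : Prop :=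
  (∀ m ∈ M, m ∈ G.edgeSet ∧ ∀ v ∈ m, v ∈ A) ∧
    ∀ m ∈ M, ∀ m' ∈ M, m ≠ m' → ∀ v : V, v ∈ m → v ∉ m'

open Finset Function

section

variable {V : Type*} {G : SimpleGraph V}

namespace IsMatchingOn

variable {A B : Set V} {M M₁ M₂ : Finset (Sym2 V)}

theorem disjoint (h₁ : IsMatchingOn G A M₁) (h₂ : IsMatchingOn G B M₂) (hAB : Disjoint A B) :
    Disjoint M₁ M₂ :=
  Finset.disjoint_left.2 fun m hm₁ hm₂ =>
    Set.disjoint_left.1 hAB ((h₁.1 m hm₁).2 _ m.out_fst_mem) ((h₂.1 m hm₂).2 _ m.out_fst_mem)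

theorem union [DecidableEq V] (h₁ : IsMatchingOn G A M₁) (h₂ : IsMatchingOn G B M₂)
    (hAB : Disjoint A B) : IsMatchingOn G (A ∪ B) (M₁ ∪ M₂) := by
  refine ⟨fun m hm => ?_, fun m hm m' hm' hne v hv hv' => ?_⟩
  · rcases mem_union.1 hm with hm | hm
    · exact ⟨(h₁.1 m hm).1, fun v hv => Or.inl ((h₁.1 m hm).2 v hv)⟩
    · exact ⟨(h₂.1 m hm).1, fun v hv => Or.inr ((h₂.1 m hm).2 v hv)⟩
  · rcases mem_union.1 hm with hm | hm <;> rcases mem_union.1 hm' with hm' | hm'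
    · exact h₁.2 m hm m' hm' hne v hv hv'
    · exact Set.disjoint_left.1 hAB ((h₁.1 m hm).2 v hv) ((h₂.1 m' hm').2 v hv')
    · exact Set.disjoint_left.1 hAB ((h₁.1 m' hm').2 v hv') ((h₂.1 m hm).2 v hv)
    · exact h₂.2 m hm m' hm' hne v hv hv'

theorem filter (h : IsMatchingOn G A M) (p : Sym2 V → Prop) [DecidablePred p]
    (hp : ∀ m ∈ M, p m → ∀ v ∈ m, v ∈ B) : IsMatchingOn G B (M.filter p) := by
  refine ⟨fun m hm => ?_, fun m hm m' hm' => h.2 m (mem_filter.1 hm).1 m' (mem_filter.1 hm').1⟩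
  obtain ⟨hmM, hpm⟩ := mem_filter.1 hm
  exact ⟨(h.1 m hmM).1, hp m hmM hpm⟩

theorem card_filter_exists_mem_le [DecidableEq V] (h : IsMatchingOn G A M) (S : Finset V) :
    #{m ∈ M | ∃ v ∈ S, v ∈ m} ≤ #S := by
  refine card_le_card_of_forall_subsingleton (fun m v => v ∈ m) (fun m hm => ?_)
    fun v _ m₁ hm₁ m₂ hm₂ => ?_
  · obtain ⟨v, hvS, hvm⟩ := (mem_filter.1 hm).2
    exact ⟨v, hvS, hvm⟩
  · by_contra hne
    exact h.2 m₁ (mem_filter.1 hm₁.1).1 m₂ (mem_filter.1 hm₂.1).1 hne v hm₁.2 hm₂.2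

end IsMatchingOn

theorem exists_isMatchingOn_card_eq_of_injective [DecidableEq V] {ι : Type*} [Fintype ι]
    {B : Set V} {g f : ι → V} (hg : Injective g) (hf : Injective f) (hgf : ∀ i j, g i ≠ f j)
    (hadj : ∀ i, G.Adj (g i) (f i)) (hB : ∀ i, g i ∈ B ∧ f i ∈ B) :
    ∃ M, IsMatchingOn G B M ∧ #M = Fintype.card ι := by
  have hinj : Injective fun i => s(g i, f i) := fun i j hij => by
    rcases Sym2.eq_iff.1 hij with ⟨h, -⟩ | ⟨h, -⟩
    · exact hg h
    · exact absurd h (hgf i j)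
  refine ⟨univ.image fun i => s(g i, f i), ⟨fun m hm => ?_, fun m hm m' hm' hne v hv hv' => ?_⟩,
    by rw [card_image_of_injective _ hinj, card_univ]⟩
  · obtain ⟨i, -, rfl⟩ := mem_image.1 hm
    refine ⟨hadj i, fun v hv => ?_⟩
    rcases Sym2.mem_iff.1 hv with rfl | rfl
    exacts [(hB i).1, (hB i).2]
  · obtain ⟨i, -, rfl⟩ := mem_image.1 hm
    obtain ⟨j, -, rfl⟩ := mem_image.1 hm'
    have hij : i ≠ j := fun h => hne (h ▸ rfl)
    rcases Sym2.mem_iff.1 hv with rfl | rfl <;> rcases Sym2.mem_iff.1 hv' with h | h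
    exacts [hij (hg h), hgf i j h, hgf j i h.symm, hij (hf h)]

variable {y : V → ℝ}

theorem ite_half_mem_fracMatchingPolytope [DecidableEq V] (hy : y ∈ fracMatchingPolytope G)
    (T : Finset V) (hT : ∀ u v, G.Adj u v → u ∈ T → v ∉ T → y v ≤ 1 / 2) :
    (fun v => if v ∈ T then 1 / 2 else y v) ∈ fracMatchingPolytope G := by
  obtain ⟨hy0, hy1, hyadj⟩ := hy
  refine ⟨fun v => ?_, fun v => ?_, fun u v huv => ?_⟩
  · dsimp only; split_ifs <;> linarith [hy0 v]
  · dsimp only; split_ifs <;> linarith [hy1 v]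
  · dsimp only
    have := hT u v huv
    have := hT v u huv.symm
    have := hyadj u v huv
    split_ifs <;> simp_all <;> linarith

theorem eq_half_of_adj_of_ne_zero (hy : y ∈ fracMatchingPolytope G)
    (hhalf : ∀ v, y v = 0 ∨ y v = 1 / 2 ∨ y v = 1) {u v : V} (huv : G.Adj u v)
    (hu : y u ≠ 0) (hv : y v ≠ 0) : y u = 1 / 2 := by
  have := hy.2.2 u v huv
  rcases hhalf u with h | h | h <;> rcases hhalf v with h' | h' | h' <;> simp_all <;> linarith

variable [Fintype V]

theorem sum_ite_mem_eq_sum_add [DecidableEq V] (T : Finset V) (c : ℝ) :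
    ∑ v, (if v ∈ T then c else y v) = ∑ v, y v + ∑ v ∈ T, (c - y v) := by
  rw [← sum_filter_add_sum_filter_not univ (· ∈ T), ← sum_filter_add_sum_filter_not univ (· ∈ T) y]
  simp only [filter_mem_eq_inter, univ_inter]
  rw [sum_congr rfl fun v hv => if_pos hv, sum_sub_distrib]
  rw [sum_congr rfl fun v hv => if_neg (mem_filter.1 hv).2]
  ring

theorem card_le_card_heavy_neighbors [DecidableEq V] [DecidableRel G.Adj]
    (hy : y ∈ fracMatchingPolytope G) (hopt : ∀ z ∈ fracMatchingPolytope G, ∑ v, z v ≤ ∑ v, y v)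
    (s : Finset V) (hs : ∀ v ∈ s, y v = 0) : #s ≤ #{c | ∃ v ∈ s, G.Adj v c ∧ 1 / 2 < y c} := by
  set N : Finset V := {c | ∃ v ∈ s, G.Adj v c ∧ 1 / 2 < y c}
  by_contra! hlt
  have hN : ∀ c ∈ N, 1 / 2 < y c := fun c hc => by
    obtain ⟨-, -, -, h⟩ := (mem_filter.1 hc).2
    exact h
  have hsN : Disjoint s N := Finset.disjoint_left.2 fun v hvs hvN => by
    linarith [hs v hvs, hN v hvN]
  have hz := ite_half_mem_fracMatchingPolytope hy (s ∪ N) fun u v huv hu hv => by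
    rcases mem_union.1 hu with hu | hu
    · by_contra! hv'
      exact hv (mem_union_right _ (mem_filter.2 ⟨mem_univ _, u, hu, huv, hv'⟩))
    · linarith [hN u hu, hy.2.2 u v huv]
  have hgain : 0 < ∑ v ∈ s ∪ N, (1 / 2 - y v) := by
    have hsum_s : ∑ v ∈ s, (1 / 2 - y v) = #s / 2 := by
      rw [sum_congr rfl fun v hv => by rw [hs v hv, sub_zero], sum_const, nsmul_eq_mul]; ring
    have hsum_N : -(#N : ℝ) / 2 ≤ ∑ v ∈ N, (1 / 2 - y v) := by
      calc -(#N : ℝ) / 2 = ∑ v ∈ N, (-1 / 2 : ℝ) := by rw [sum_const, nsmul_eq_mul]; ring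
        _ ≤ _ := sum_le_sum fun v _ => by linarith [hy.2.1 v]
    have : (#N : ℝ) < #s := by exact_mod_cast hlt
    rw [sum_union hsN]
    linarith
  linarith [hopt _ hz, sum_ite_mem_eq_sum_add (y := y) (s ∪ N) (1 / 2)]

theorem exists_injective_heavy_neighbor (hy : y ∈ fracMatchingPolytope G)
    (hopt : ∀ z ∈ fracMatchingPolytope G, ∑ v, z v ≤ ∑ v, y v) :
    ∃ f : {v // y v = 0} → V, Injective f ∧
      ∀ v : {v // y v = 0}, G.Adj v (f v) ∧ 1 / 2 < y (f v) := by
  classical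
  refine (Fintype.all_card_le_filter_rel_iff_exists_injective
    fun (v : {v // y v = 0}) c => G.Adj v c ∧ 1 / 2 < y c).1 fun s => ?_
  simpa using card_le_card_heavy_neighbors hy hopt (s.map (Embedding.subtype _))
    (by simp +contextual)

theorem exists_isMatchingOn_card_eq_card_zeros [DecidableEq V] (hy : y ∈ fracMatchingPolytope G)
    (hopt : ∀ z ∈ fracMatchingPolytope G, ∑ v, z v ≤ ∑ v, y v) :
    ∃ M, IsMatchingOn G {v | y v = 1 / 2}ᶜ M ∧ #M = #{v | y v = 0} := by
  obtain ⟨f, hf, hfadj⟩ := exists_injective_heavy_neighbor hy hopt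
  rw [← Fintype.card_subtype]
  refine exists_isMatchingOn_card_eq_of_injective Subtype.val_injective hf
    (fun i j h => ?_) (fun i => (hfadj i).1) fun i => ⟨?_, ?_⟩
  · linarith [i.2, h ▸ (hfadj j).2]
  · simp [i.2]
  · exact (hfadj i).2.ne'

theorem IsMatchingOn.card_le_card_zeros_add [DecidableEq V] {B : Set V} {M : Finset (Sym2 V)}
    (hM : IsMatchingOn G B M) (hy : y ∈ fracMatchingPolytope G)
    (hhalf : ∀ v, y v = 0 ∨ y v = 1 / 2 ∨ y v = 1) :
    ∃ M', IsMatchingOn G {v | y v = 1 / 2} M' ∧ #M ≤ #{v | y v = 0} + #M' := by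
  set Z : Finset V := {v | y v = 0}
  refine ⟨{m ∈ M | ¬∃ v ∈ Z, v ∈ m}, hM.filter _ fun m hm hmZ => ?_, ?_⟩
  · have hZ : ∀ v ∈ m, y v ≠ 0 := fun v hv h0 => hmZ ⟨v, by simpa [Z] using h0, hv⟩
    obtain ⟨hedge, -⟩ := hM.1 m hm
    induction m using Sym2.ind with
    | _ u w =>
      intro v hv
      rcases Sym2.mem_iff.1 hv with rfl | rfl
      · exact eq_half_of_adj_of_ne_zero hy hhalf hedge (hZ _ (Sym2.mem_mk_left _ _))
          (hZ _ (Sym2.mem_mk_right _ _))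
      · exact eq_half_of_adj_of_ne_zero hy hhalf hedge.symm (hZ _ (Sym2.mem_mk_right _ _))
          (hZ _ (Sym2.mem_mk_left _ _))
  · rw [← card_filter_add_card_filter_not (fun m => ∃ v ∈ Z, v ∈ m)]
    exact Nat.add_le_add_right (hM.card_filter_exists_mem_le Z) _

end

/-- if `y` is a half-integral optimal fractional matching of `G`,
`A = {v | y v = 1/2}` and `B = V \ A`, then the union of a maximum matching of `G[A]`
and a maximum matching of `G[B]` is a maximum matching of `G`; in particular the
matching number of `G` is the sum of the matching numbers of `G[A]` and `G[B]`. -/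
theorem fracMatching_split_max_matching {V : Type*} [Fintype V] [DecidableEq V]
    (G : SimpleGraph V) (y : V → ℝ)
    (hy : y ∈ fracMatchingPolytope G)
    (hhalf : ∀ v, y v = 0 ∨ y v = 1 / 2 ∨ y v = 1)
    (hopt : ∀ z ∈ fracMatchingPolytope G, ∑ v, z v ≤ ∑ v, y v)
    (A : Set V) (hA : A = {v | y v = 1 / 2})
    (Mc Ms : Finset (Sym2 V))
    (hMc : IsMatchingOn G A Mc)
    (hMcMax : ∀ M', IsMatchingOn G A M' → M'.card ≤ Mc.card)
    (hMs : IsMatchingOn G Aᶜ Ms)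
    (hMsMax : ∀ M', IsMatchingOn G Aᶜ M' → M'.card ≤ Ms.card) :
    (IsMatchingOn G Set.univ (Mc ∪ Ms) ∧
      ∀ M', IsMatchingOn G Set.univ M' → M'.card ≤ (Mc ∪ Ms).card) ∧
      (Mc ∪ Ms).card = Mc.card + Ms.card := by
  subst hA
  have hcard := card_union_of_disjoint (hMc.disjoint hMs disjoint_compl_right)
  refine ⟨⟨by simpa using hMc.union hMs disjoint_compl_right, fun M hM => ?_⟩, hcard⟩
  obtain ⟨MZ, hMZ, hMZcard⟩ := exists_isMatchingOn_card_eq_card_zeros hy hopt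
  obtain ⟨MA, hMA, hMle⟩ := hM.card_le_card_zeros_add hy hhalf
  have := hMcMax MA hMA
  have := hMsMax MZ hMZ
  omega
end

section
/- Let G be a finite simple graph on vertex set V such that the constant function 1/2 maximizes ∑_{v ∈ V} y v over P(G) (i.e., the optimum of the fractional matching linear program on G equals |V| / 2). Let M be a maximum matching of G, let V(M) be the set of vertices covered by M, and let I = V \ V(M). Then for every subset S ⊆ I, the maximum of ∑_v z v over the fractional matching polytope of the induced subgraph of G on V(M) ∪ S equals (|V(M)| + |S|) / 2; i.e., assigning 1/2 to every vertex of V(M) ∪ S is optimal for that induced subgraph. -/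
open scoped Classical

/-!
Say that `G` satisfies the independent Hall condition if every independent set `J` has at least
`#J` neighbours. This is equivalent to the LP optimum being `|V| / 2`: testing the optimum on the
feasible vector `1/2 + 𝟙_J/2 - 𝟙_N(J)/2` gives `#J ≤ #N(J)`; conversely, applying the condition
to `X \ N(X)` gives Hall's condition for every `X`, hence a permutation `f` of `V` with `v ~ f v`,
and summing `z v + z (f v) ≤ 1` over `v` bounds `∑ z` by `|V| / 2`.

So it suffices that the condition passes to induced subgraphs on sets `A ⊇ V(M)`. For an
independent `J`, Hall's theorem matches `J` into `N(J)`. Exchanging the `M`-edges that meet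
`J ∪ N(J)` for this matching gives a matching again, so by maximality of `M` there are at least
`#J` such edges. Each has an endpoint in `N(J) ∩ V(M) ⊆ A`, so `J` keeps `#J` neighbours in `A`.
-/

open Finset Function

section

variable {V : Type*} {G : SimpleGraph V}

lemma IsMatchingOn.union_filter_avoiding {B : Set V} {M₁ M₂ : Finset (Sym2 V)}
    (h₁ : IsMatchingOn G B M₁) (h₂ : IsMatchingOn G Set.univ M₂) :
    IsMatchingOn G Set.univ (M₁ ∪ {e ∈ M₂ | ∀ v ∈ e, v ∉ B}) := by
  refine ⟨fun m hm => ?_, fun m hm m' hm' hne v hv hv' => ?_⟩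
  · rcases mem_union.1 hm with hm | hm
    · exact ⟨(h₁.1 m hm).1, fun _ _ => trivial⟩
    · exact h₂.1 m (mem_filter.1 hm).1
  · rcases mem_union.1 hm with hm | hm <;> rcases mem_union.1 hm' with hm' | hm'
    · exact h₁.2 m hm m' hm' hne v hv hv'
    · exact (mem_filter.1 hm').2 v hv' ((h₁.1 m hm).2 v hv)
    · exact (mem_filter.1 hm).2 v hv ((h₁.1 m' hm').2 v hv')
    · exact h₂.2 m (mem_filter.1 hm).1 m' (mem_filter.1 hm').1 hne v hv hv'

lemma IsMatchingOn.disjoint_filter_avoiding {B : Set V} {M₁ : Finset (Sym2 V)}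
    (h₁ : IsMatchingOn G B M₁) (M₂ : Finset (Sym2 V)) :
    Disjoint M₁ {e ∈ M₂ | ∀ v ∈ e, v ∉ B} :=
  disjoint_left.2 fun e he he' =>
    (mem_filter.1 he').2 _ e.out_fst_mem ((h₁.1 e he).2 _ e.out_fst_mem)

end

section

variable {V : Type*} [Fintype V] {G : SimpleGraph V}

variable (G) in
noncomputable def nbhdFinset (J : Finset V) : Finset V := J.biUnion fun v => G.neighborFinset v

@[simp]
lemma mem_nbhdFinset {J : Finset V} {v : V} : v ∈ nbhdFinset G J ↔ ∃ j ∈ J, G.Adj j v := by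
  simp [nbhdFinset]

variable (G) in
def IndepHallCondition : Prop :=
  ∀ J : Finset V, G.IsIndepSet J → #J ≤ #(nbhdFinset G J)

lemma IndepHallCondition.card_le_card_nbhdFinset (hG : IndepHallCondition G)
    (X : Finset V) : #X ≤ #(nbhdFinset G X) := by
  set N := nbhdFinset G X
  have hindep : G.IsIndepSet ↑(X \ N) := by
    intro a ha b hb _ hab
    simp only [coe_sdiff, Set.mem_sdiff, mem_coe] at ha hb
    exact hb.2 (mem_nbhdFinset.2 ⟨a, ha.1, hab⟩)
  have hnbhd : nbhdFinset G (X \ N) ⊆ N \ X := by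
    intro v hv
    obtain ⟨i, hi, hiv⟩ := mem_nbhdFinset.1 hv
    obtain ⟨hiX, hiN⟩ := mem_sdiff.1 hi
    exact mem_sdiff.2 ⟨mem_nbhdFinset.2 ⟨i, hiX, hiv⟩,
      fun hvX => hiN (mem_nbhdFinset.2 ⟨v, hvX, hiv.symm⟩)⟩
  calc #X = #(X \ N) + #(X ∩ N) := (card_sdiff_add_card_inter X N).symm
    _ ≤ #(N \ X) + #(N ∩ X) := by
      rw [inter_comm]
      exact Nat.add_le_add_right ((hG _ hindep).trans (card_le_card hnbhd)) _
    _ = #N := card_sdiff_add_card_inter N X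

lemma IndepHallCondition.exists_bijective_adj (hG : IndepHallCondition G) :
    ∃ f : V → V, Bijective f ∧ ∀ v, G.Adj v (f v) := by
  obtain ⟨f, hf, hfN⟩ := (all_card_le_biUnion_card_iff_exists_injective
    fun v => G.neighborFinset v).1 hG.card_le_card_nbhdFinset
  exact ⟨f, Finite.injective_iff_bijective.1 hf, fun v => (G.mem_neighborFinset _ _).1 (hfN v)⟩

lemma IndepHallCondition.sum_le_card_div_two (hG : IndepHallCondition G) {z : V → ℝ}
    (hz : z ∈ fracMatchingPolytope G) : ∑ v, z v ≤ Fintype.card V / 2 := by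
  obtain ⟨f, hf, hadj⟩ := hG.exists_bijective_adj
  have hperm : ∑ v, z (f v) = ∑ v, z v := (Equiv.ofBijective f hf).sum_comp z
  have hpairs : ∑ v, (z v + z (f v)) ≤ ∑ _v : V, (1 : ℝ) :=
    sum_le_sum fun v _ => hz.2.2 v (f v) (hadj v)
  rw [sum_add_distrib, hperm, sum_const, card_univ, nsmul_one] at hpairs
  linarith

lemma indepHallCondition_of_sum_le
    (hopt : ∀ z ∈ fracMatchingPolytope G, ∑ v, z v ≤ (Fintype.card V : ℝ) / 2) :
    IndepHallCondition G := by
  intro J hJ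
  set N := nbhdFinset G J
  have hadjN : ∀ u v, u ∈ J → G.Adj u v → v ∈ N := fun u v hu huv =>
    mem_nbhdFinset.2 ⟨u, hu, huv⟩
  have hJN : ∀ v ∈ J, v ∉ N := by
    intro v hv hvN
    obtain ⟨u, hu, huv⟩ := mem_nbhdFinset.1 hvN
    exact hJ hu hv huv.ne huv
  set y : V → ℝ := fun v => 1 / 2 + (if v ∈ J then 1 / 2 else 0) - (if v ∈ N then 1 / 2 else 0)
  have hy : y ∈ fracMatchingPolytope G := by
    refine ⟨fun v => ?_, fun v => ?_, fun u v huv => ?_⟩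
    · simp only [y]; split_ifs <;> norm_num
    · have := hJN v; simp only [y]; split_ifs <;> simp_all <;> norm_num
    · have := hadjN u v; have := hadjN v u; have := hJN u; have := hJN v
      simp only [y]; split_ifs <;> simp_all [huv.symm] <;> norm_num
  have hsum : ∑ v, y v = Fintype.card V / 2 + #J / 2 - #N / 2 := by
    simp [y, sum_add_distrib, sum_sub_distrib, sum_ite_mem]
    ring
  have hbound := hopt y hy
  exact_mod_cast (by linarith : (#J : ℝ) ≤ #N)

lemma IndepHallCondition.exists_matching_of_isIndepSet (hG : IndepHallCondition G)
    {J : Finset V} (hJ : G.IsIndepSet J) :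
    ∃ MJ, IsMatchingOn G ↑(J ∪ nbhdFinset G J) MJ ∧ #MJ = #J := by
  obtain ⟨f, hf, hfN⟩ := (all_card_le_biUnion_card_iff_exists_injective
    fun j : J => G.neighborFinset j).1 fun s => by
      have := hG (s.image Subtype.val) (hJ.mono fun x hx => by
        obtain ⟨y, -, rfl⟩ := mem_image.1 hx
        exact y.2)
      rwa [card_image_of_injective _ Subtype.val_injective, nbhdFinset, image_biUnion] at this
  have hadj : ∀ j : J, G.Adj j (f j) := fun j => (G.mem_neighborFinset _ _).1 (hfN j)
  have hfJ : ∀ j : J, f j ∉ J := fun j hj => hJ j.2 hj (hadj j).ne (hadj j)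
  have hinj : Injective fun j : J => s(↑j, f j) := by
    intro j j' h
    rcases Sym2.eq_iff.1 h with ⟨h, -⟩ | ⟨-, h⟩
    · exact Subtype.ext h
    · exact absurd (h ▸ j'.2) (hfJ j)
  refine ⟨univ.image fun j : J => s(↑j, f j), ⟨fun m hm => ?_, fun m hm m' hm' hne v hv hv' => ?_⟩,
    by rw [card_image_of_injective _ hinj, card_univ, Fintype.card_coe]⟩
  · obtain ⟨j, -, rfl⟩ := mem_image.1 hm
    refine ⟨hadj j, fun v hv => ?_⟩
    rcases Sym2.mem_iff.1 hv with rfl | rfl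
    · exact mem_union_left _ j.2
    · exact mem_union_right _ (mem_nbhdFinset.2 ⟨j, j.2, hadj j⟩)
  · obtain ⟨j, -, rfl⟩ := mem_image.1 hm
    obtain ⟨j', -, rfl⟩ := mem_image.1 hm'
    have hjj' : j ≠ j' := fun h => hne (h ▸ rfl)
    rcases Sym2.mem_iff.1 hv with rfl | rfl <;> rcases Sym2.mem_iff.1 hv' with h | h
    · exact hjj' (Subtype.ext h)
    · exact hfJ j' (h ▸ j.2)
    · exact hfJ j (h ▸ j'.2)
    · exact hjj' (hf h)

lemma IsMatchingOn.card_filter_meeting_le {M : Finset (Sym2 V)} (hM : IsMatchingOn G Set.univ M)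
    (J : Finset V) :
    #{e ∈ M | ∃ v ∈ e, v ∈ J ∪ nbhdFinset G J} ≤ #{v ∈ nbhdFinset G J | ∃ e ∈ M, v ∈ e} := by
  refine card_le_card_of_forall_subsingleton (fun e v => v ∈ e) (fun e he => ?_) ?_
  · obtain ⟨heM, v, hve, hv⟩ := mem_filter.1 he
    rcases mem_union.1 hv with hvJ | hvN
    · have hadj : G.Adj v (Sym2.Mem.other hve) := by
        rw [← SimpleGraph.mem_edgeSet, Sym2.other_spec hve]
        exact (hM.1 e heM).1
      exact ⟨_, mem_filter.2 ⟨mem_nbhdFinset.2 ⟨v, hvJ, hadj⟩, e, heM, Sym2.other_mem hve⟩,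
        Sym2.other_mem hve⟩
    · exact ⟨v, mem_filter.2 ⟨hvN, e, heM, hve⟩, hve⟩
  · intro v _ e he e' he'
    by_contra hne
    exact hM.2 e (mem_filter.1 he.1).1 e' (mem_filter.1 he'.1).1 hne v he.2 he'.2

lemma IndepHallCondition.card_le_card_matched_nbhdFinset (hG : IndepHallCondition G)
    {M : Finset (Sym2 V)} (hM : IsMatchingOn G Set.univ M)
    (hMmax : ∀ M', IsMatchingOn G Set.univ M' → #M' ≤ #M)
    {J : Finset V} (hJ : G.IsIndepSet J) :
    #J ≤ #{v ∈ nbhdFinset G J | ∃ e ∈ M, v ∈ e} := by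
  obtain ⟨MJ, hMJ, hcard⟩ := hG.exists_matching_of_isIndepSet hJ
  have hexchange := hMmax _ (hMJ.union_filter_avoiding hM)
  rw [card_union_of_disjoint (hMJ.disjoint_filter_avoiding M), hcard] at hexchange
  have hsplit :=
    card_filter_add_card_filter_not (s := M) fun e => ∃ v ∈ e, v ∈ J ∪ nbhdFinset G J
  simp only [not_exists, not_and] at hsplit
  have hmeeting := hM.card_filter_meeting_le J
  simp only [mem_coe] at hexchange
  omega

lemma IndepHallCondition.induce_of_matched_subset (hG : IndepHallCondition G)
    {M : Finset (Sym2 V)} (hM : IsMatchingOn G Set.univ M)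
    (hMmax : ∀ M', IsMatchingOn G Set.univ M' → #M' ≤ #M)
    {A : Set V} [Fintype A] (hA : ∀ v, (∃ e ∈ M, v ∈ e) → v ∈ A) :
    IndepHallCondition (G.induce A) := by
  intro J hJ
  have hJ' : G.IsIndepSet ↑(J.map (Embedding.subtype _)) := by
    rintro _ ha _ hb hne
    simp only [coe_map, Embedding.subtype_apply, Set.mem_image, mem_coe] at ha hb
    obtain ⟨a, ha, rfl⟩ := ha
    obtain ⟨b, hb, rfl⟩ := hb
    exact hJ ha hb (fun h => hne (h ▸ rfl))
  calc #J = #(J.map (Embedding.subtype _)) := (card_map _).symm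
    _ ≤ #{v ∈ nbhdFinset G (J.map (Embedding.subtype _)) | ∃ e ∈ M, v ∈ e} :=
      hG.card_le_card_matched_nbhdFinset hM hMmax hJ'
    _ ≤ #((nbhdFinset (G.induce A) J).map (Embedding.subtype _)) := by
      refine card_le_card fun v hv => ?_
      obtain ⟨hvN, hvM⟩ := mem_filter.1 hv
      obtain ⟨_, hjJ, hjv⟩ := mem_nbhdFinset.1 hvN
      obtain ⟨j, hj, rfl⟩ := mem_map.1 hjJ
      exact mem_map.2 ⟨⟨v, hA v hvM⟩, mem_nbhdFinset.2 ⟨j, hj, hjv⟩, rfl⟩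
    _ = #(nbhdFinset (G.induce A) J) := card_map _

end

/-- if the all-`1/2` vector is optimal for the fractional matching LP on
`G` (the optimum equals `|V| / 2`), `M` is a maximum matching of `G` with vertex set
`V(M)`, and `S` is any set of unmatched vertices, then the optimum of the fractional
matching LP on the subgraph induced on `V(M) ∪ S` equals `(|V(M)| + |S|) / 2`. -/
theorem fracMatching_all_half_induced_optimal {V : Type*} [Fintype V] [DecidableEq V]
    (G : SimpleGraph V)
    (hopt : ∀ z ∈ fracMatchingPolytope G, ∑ v, z v ≤ (Fintype.card V : ℝ) / 2)
    (M : Finset (Sym2 V))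
    (hM : IsMatchingOn G Set.univ M)
    (hMmax : ∀ M', IsMatchingOn G Set.univ M' → M'.card ≤ M.card)
    (VM : Set V) (hVM : VM = {v | ∃ m ∈ M, v ∈ m})
    (S : Set V) (hS : S ⊆ VMᶜ) :
    IsGreatest
      ((fun z : ↥(VM ∪ S) → ℝ => ∑ v, z v) '' fracMatchingPolytope (G.induce (VM ∪ S)))
      (((VM.ncard : ℝ) + (S.ncard : ℝ)) / 2) := by
  have hcard : Fintype.card ↥(VM ∪ S) = VM.ncard + S.ncard := by
    rw [← Nat.card_eq_fintype_card, Nat.card_coe_set_eq,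
      Set.ncard_union_eq (disjoint_compl_right.mono_right hS)]
  have hH : IndepHallCondition (G.induce (VM ∪ S)) :=
    (indepHallCondition_of_sum_le hopt).induce_of_matched_subset hM hMmax
      fun v hv => Or.inl (hVM ▸ hv)
  refine ⟨⟨fun _ => 1 / 2, ⟨fun _ => by norm_num, fun _ => by norm_num, fun _ _ _ => by norm_num⟩,
    ?_⟩, ?_⟩
  · simp [hcard]
    ring
  · rintro _ ⟨z, hz, rfl⟩
    simpa [hcard] using hH.sum_le_card_div_two hz
end

section
/- For every hypergraph G = (V, E) with V finite and E a finite set of subsets of V, and every natural number s with 1 ≤ s ≤ |V| and |⋃_{e∈E} e| ≥ s, we have IntCover(G, s) ≤ 10.37 · FracCover(G, s) + 1. -/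
/-!
Round a fractional cover `x` of cost `c`. Vertices covered to at least `1/2` are covered by `2x`.
The remaining vertices `L` still carry fractional coverage at least `t`, the number of vertices
still missing, and each has coverage at most `1/2`. By double counting, `∑_{v ∈ R} cov v` equals
`∑_e x e * |R ∩ e|`, so some edge meets a set `R` in at least `(∑_{v ∈ R} cov v) / c` vertices.
Greedily buying such edges for the still uncovered part of `L` gains more than `t / (2c)` new
vertices per edge, so at most `2c + 1` edges cover `t` vertices of `L`. Hence
`IntCover ≤ 2c + (2c + 1) = 4c + 1`, and `4 ≤ 10.37`.
-/

open Finset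

/-- `FracCover G s`: the infimum of `∑_{e ∈ E} x e` over all nonnegative `x` with
`∑_{v ∈ V} min 1 (∑_{e ∋ v} x e) ≥ s`. -/
noncomputable def FracCover {V : Type*} [Fintype V] [DecidableEq V]
    (E : Finset (Finset V)) (s : ℕ) : ℝ :=
  sInf {c : ℝ | ∃ x : Finset V → ℝ, (∀ e ∈ E, 0 ≤ x e) ∧
    (s : ℝ) ≤ ∑ v : V, min 1 (∑ e ∈ E.filter (fun e => v ∈ e), x e) ∧
    c = ∑ e ∈ E, x e}

/-- `IntCover G s`: the infimum of `∑_{e ∈ E} x e` over all nonnegative `x` for which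
there is an `S ⊆ V` with `|S| = s` such that `∑_{e ∋ v} x e ≥ 1` for all `v ∈ S`. -/
noncomputable def IntCover {V : Type*} [Fintype V] [DecidableEq V]
    (E : Finset (Finset V)) (s : ℕ) : ℝ :=
  sInf {c : ℝ | ∃ x : Finset V → ℝ, (∀ e ∈ E, 0 ≤ x e) ∧
    (∃ S : Finset V, S.card = s ∧ ∀ v ∈ S, 1 ≤ ∑ e ∈ E.filter (fun e => v ∈ e), x e) ∧
    c = ∑ e ∈ E, x e}

section Coverage

variable {V : Type*} [DecidableEq V] {E : Finset (Finset V)} {x : Finset V → ℝ}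

def coverage (E : Finset (Finset V)) (x : Finset V → ℝ) (v : V) : ℝ :=
  ∑ e ∈ E with v ∈ e, x e

lemma coverage_nonneg (hx : ∀ e ∈ E, 0 ≤ x e) (v : V) : 0 ≤ coverage E x v :=
  sum_nonneg fun e he => hx e (mem_filter.mp he).1

lemma le_coverage (hx : ∀ e ∈ E, 0 ≤ x e) {e : Finset V} (he : e ∈ E) {v : V} (hv : v ∈ e) :
    x e ≤ coverage E x v :=
  single_le_sum (fun e he => hx e (mem_filter.mp he).1) (mem_filter.mpr ⟨he, hv⟩)

lemma coverage_mono {y : Finset V → ℝ} (hxy : ∀ e ∈ E, x e ≤ y e) (v : V) :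
    coverage E x v ≤ coverage E y v :=
  sum_le_sum fun e he => hxy e (mem_filter.mp he).1

lemma coverage_const_mul (a : ℝ) (v : V) :
    coverage E (fun e => a * x e) v = a * coverage E x v :=
  (mul_sum _ _ _).symm

lemma sum_coverage_eq_sum_mul_card_inter (R : Finset V) :
    ∑ v ∈ R, coverage E x v = ∑ e ∈ E, x e * #(R ∩ e) := by
  simp only [coverage, sum_filter]
  rw [sum_comm]
  refine sum_congr rfl fun e _ => ?_
  rw [sum_ite_mem, sum_const, nsmul_eq_mul, mul_comm]

lemma exists_sum_coverage_le_mul_card_inter (hx : ∀ e ∈ E, 0 ≤ x e) (hE : E.Nonempty)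
    (R : Finset V) : ∃ e ∈ E, ∑ v ∈ R, coverage E x v ≤ (∑ e ∈ E, x e) * #(R ∩ e) := by
  obtain ⟨e, he, hmax⟩ := E.exists_max_image (fun e => #(R ∩ e)) hE
  refine ⟨e, he, ?_⟩
  rw [sum_coverage_eq_sum_mul_card_inter, sum_mul]
  exact sum_le_sum fun f hf => mul_le_mul_of_nonneg_left (by exact_mod_cast hmax f hf) (hx f hf)

lemma card_inter_union_eq (L A U : Finset V) : #(L ∩ (A ∪ U)) = #(L ∩ U) + #((L \ U) ∩ A) := by
  rw [← card_union_of_disjoint]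
  · congr 1
    ext v
    simp only [mem_inter, mem_union, mem_sdiff]
    tauto
  · rw [disjoint_left]
    intro v hv hv'
    exact (mem_sdiff.mp (mem_inter.mp hv').1).2 (mem_inter.mp hv).2

variable {L : Finset V} {t : ℕ}

lemma exists_edge_gaining (hx : ∀ e ∈ E, 0 ≤ x e) (hL : ∀ v ∈ L, coverage E x v ≤ 1 / 2)
    (ht : (t : ℝ) ≤ ∑ v ∈ L, coverage E x v) {U : Finset V} (hU : #(L ∩ U) < t) :
    ∃ e ∈ E, (t : ℝ) < 2 * (∑ e ∈ E, x e) * #((L \ U) ∩ e) := by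
  have hcovered : ∑ v ∈ L ∩ U, coverage E x v ≤ #(L ∩ U) * (1 / 2) := by
    simpa using sum_le_card_nsmul _ _ _ fun v hv => hL v (mem_inter.mp hv).1
  have hUt : (#(L ∩ U) : ℝ) < t := by exact_mod_cast hU
  have hrest : (t : ℝ) / 2 < ∑ v ∈ L \ U, coverage E x v := by
    rw [← sum_inter_add_sum_sdiff L U] at ht
    linarith
  have hE : E.Nonempty := by
    rw [nonempty_iff_ne_empty]
    rintro rfl
    simp only [coverage, filter_empty, sum_empty, sum_const_zero] at hrest
    linarith [(by positivity : (0 : ℝ) ≤ t / 2)]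
  obtain ⟨e, he, hle⟩ := exists_sum_coverage_le_mul_card_inter hx hE (L \ U)
  exact ⟨e, he, by linarith⟩

lemma exists_greedy_cover (hx : ∀ e ∈ E, 0 ≤ x e) (hL : ∀ v ∈ L, coverage E x v ≤ 1 / 2)
    (ht : (t : ℝ) ≤ ∑ v ∈ L, coverage E x v) (j : ℕ) :
    ∃ F ⊆ E, #F ≤ j ∧ (t ≤ #(L ∩ F.biUnion id) ∨
      (j * t : ℝ) ≤ 2 * (∑ e ∈ E, x e) * #(L ∩ F.biUnion id)) := by
  induction j with
  | zero => exact ⟨∅, empty_subset _, le_rfl, Or.inr (by simp)⟩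
  | succ j ih =>
    obtain ⟨F, hFE, hFj, hF⟩ := ih
    by_cases hdone : t ≤ #(L ∩ F.biUnion id)
    · exact ⟨F, hFE, hFj.trans j.le_succ, Or.inl hdone⟩
    have hprog := hF.resolve_left hdone
    obtain ⟨e, he, hgain⟩ := exists_edge_gaining hx hL ht (not_le.mp hdone)
    refine ⟨insert e F, insert_subset he hFE, (card_insert_le e F).trans (by omega), Or.inr ?_⟩
    rw [biUnion_insert, id, card_inter_union_eq]
    push_cast
    linarith

lemma exists_cover_card_le (hx : ∀ e ∈ E, 0 ≤ x e) (hL : ∀ v ∈ L, coverage E x v ≤ 1 / 2)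
    (ht : (t : ℝ) ≤ ∑ v ∈ L, coverage E x v) :
    ∃ F ⊆ E, (#F : ℝ) ≤ 2 * (∑ e ∈ E, x e) + 1 ∧ t ≤ #(L ∩ F.biUnion id) := by
  set c := ∑ e ∈ E, x e
  have hc : 0 ≤ c := sum_nonneg hx
  obtain ⟨F, hFE, hFj, hF⟩ := exists_greedy_cover hx hL ht (⌊2 * c⌋₊ + 1)
  refine ⟨F, hFE, ?_, ?_⟩
  · have hfloor := Nat.floor_le (by positivity : 0 ≤ 2 * c)
    have hFj' : (#F : ℝ) ≤ ⌊2 * c⌋₊ + 1 := by exact_mod_cast hFj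
    linarith
  · refine hF.elim id fun hprog => ?_
    by_contra! hlt
    have hlt' : (#(L ∩ F.biUnion id) : ℝ) < t := by exact_mod_cast hlt
    have hj := Nat.lt_floor_add_one (2 * c)
    push_cast at hprog
    nlinarith

end Coverage

lemma sum_min_one_le_card_add_sum {V : Type*} [Fintype V] (f : V → ℝ) (p : V → Prop)
    [DecidablePred p] :
    ∑ v, min 1 (f v) ≤ #{v | p v} + ∑ v with ¬p v, f v := by
  rw [← sum_filter_add_sum_filter_not univ p]
  gcongr with v
  · simpa using sum_le_card_nsmul _ _ 1 fun v _ => min_le_left 1 (f v)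
  · exact min_le_right _ _

section Covers

variable {V : Type*} [Fintype V] [DecidableEq V] {E : Finset (Finset V)} {s : ℕ}
  {x : Finset V → ℝ}

lemma card_le_sum_min_one_coverage (hx : ∀ e ∈ E, 0 ≤ x e) {S : Finset V}
    (hS : ∀ v ∈ S, 1 ≤ coverage E x v) : (#S : ℝ) ≤ ∑ v, min 1 (coverage E x v) :=
  calc (#S : ℝ) = ∑ v ∈ S, min 1 (coverage E x v) := by
        rw [sum_congr rfl fun v hv => min_eq_left (hS v hv)]
        simp
    _ ≤ ∑ v, min 1 (coverage E x v) :=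
        sum_le_sum_of_subset_of_nonneg (subset_univ S)
          fun v _ _ => le_min zero_le_one (coverage_nonneg hx v)

lemma fracCover_nonneg : 0 ≤ FracCover E s :=
  Real.sInf_nonneg <| by
    rintro _ ⟨x, hx, -, rfl⟩
    exact sum_nonneg hx

lemma intCover_le (hx : ∀ e ∈ E, 0 ≤ x e) {S : Finset V} (hS : #S = s)
    (hcov : ∀ v ∈ S, 1 ≤ coverage E x v) : IntCover E s ≤ ∑ e ∈ E, x e :=
  csInf_le ⟨0, by rintro _ ⟨y, hy, -, rfl⟩; exact sum_nonneg hy⟩ ⟨x, hx, ⟨S, hS, hcov⟩, rfl⟩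

lemma intCover_le_two_mul_add_card (hx : ∀ e ∈ E, 0 ≤ x e) {F : Finset (Finset V)}
    {S : Finset V} (hFE : F ⊆ E) (hS : #S = s)
    (hSF : ∀ v ∈ S, 1 / 2 ≤ coverage E x v ∨ ∃ e ∈ F, v ∈ e) :
    IntCover E s ≤ 2 * ∑ e ∈ E, x e + #F := by
  set y : Finset V → ℝ := fun e => 2 * x e + if e ∈ F then 1 else 0
  have hxy : ∀ e ∈ E, 2 * x e ≤ y e := fun e _ =>
    le_add_of_nonneg_right (by split_ifs <;> norm_num)
  have hy : ∀ e ∈ E, 0 ≤ y e := fun e he => by linarith [hx e he, hxy e he]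
  calc IntCover E s ≤ ∑ e ∈ E, y e := intCover_le hy hS fun v hv => ?_
    _ = 2 * ∑ e ∈ E, x e + #F := by
        rw [sum_add_distrib, ← mul_sum, sum_boole, filter_mem_eq_inter, inter_eq_right.mpr hFE]
  rcases hSF v hv with hhalf | ⟨e, heF, hve⟩
  · calc 1 ≤ 2 * coverage E x v := by linarith
      _ = coverage E (fun e => 2 * x e) v := (coverage_const_mul 2 v).symm
      _ ≤ coverage E y v := coverage_mono hxy v
  · calc 1 ≤ y e := by simp [y, heF, hx e (hFE heF)]
      _ ≤ coverage E y v := le_coverage hy (hFE heF) hve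

lemma intCover_le_four_mul_add_one (hx : ∀ e ∈ E, 0 ≤ x e)
    (hfeas : (s : ℝ) ≤ ∑ v, min 1 (coverage E x v)) :
    IntCover E s ≤ 4 * ∑ e ∈ E, x e + 1 := by
  set H : Finset V := {v | 1 / 2 ≤ coverage E x v}
  set L : Finset V := {v | ¬1 / 2 ≤ coverage E x v}
  have hsplit := hfeas.trans (sum_min_one_le_card_add_sum (coverage E x) (1 / 2 ≤ coverage E x ·))
  have ht : ((s - #H : ℕ) : ℝ) ≤ ∑ v ∈ L, coverage E x v := by
    rcases le_total s #H with h | h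
    · rw [Nat.sub_eq_zero_of_le h, Nat.cast_zero]
      exact sum_nonneg fun v _ => coverage_nonneg hx v
    · rw [Nat.cast_sub h]
      linarith
  obtain ⟨F, hFE, hFcard, hFt⟩ :=
    exists_cover_card_le hx (fun v hv => (not_le.mp (mem_filter.mp hv).2).le) ht
  obtain ⟨T, hT, hTcard⟩ := exists_subset_card_eq hFt
  obtain ⟨H', hH', hH'card⟩ := exists_subset_card_eq (show s - (s - #H) ≤ #H by omega)
  have hdisj : Disjoint H' T :=
    (disjoint_filter_filter_not univ univ _).mono hH' (hT.trans inter_subset_left)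
  have hcover : ∀ v ∈ H' ∪ T, 1 / 2 ≤ coverage E x v ∨ ∃ e ∈ F, v ∈ e := by
    intro v hv
    rcases mem_union.mp hv with hv | hv
    · exact Or.inl (mem_filter.mp (hH' hv)).2
    · exact Or.inr (mem_biUnion.mp (mem_inter.mp (hT hv)).2)
  calc IntCover E s ≤ 2 * ∑ e ∈ E, x e + #F :=
        intCover_le_two_mul_add_card hx hFE (by rw [card_union_of_disjoint hdisj]; omega) hcover
    _ ≤ 4 * ∑ e ∈ E, x e + 1 := by linarith

lemma intCover_le_four_mul_fracCover_add_one : IntCover E s ≤ 4 * FracCover E s + 1 := by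
  by_cases hfrac : ∃ x : Finset V → ℝ, (∀ e ∈ E, 0 ≤ x e) ∧
      (s : ℝ) ≤ ∑ v, min 1 (coverage E x v)
  · obtain ⟨x, hx, hfeas⟩ := hfrac
    have hle : (IntCover E s - 1) / 4 ≤ FracCover E s := le_csInf ⟨_, x, hx, hfeas, rfl⟩ <| by
      rintro _ ⟨y, hy, hfy, rfl⟩
      linarith [intCover_le_four_mul_add_one hy hfy]
    linarith
  · push Not at hfrac
    -- an integral solution is also a fractional one, so both infima are `sInf ∅ = 0`
    have hint : IntCover E s = 0 := by
      refine (congrArg sInf (Set.eq_empty_iff_forall_notMem.mpr ?_)).trans Real.sInf_empty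
      rintro _ ⟨x, hx, ⟨S, rfl, hS⟩, -⟩
      exact (hfrac x hx).not_ge (card_le_sum_min_one_coverage hx hS)
    linarith [fracCover_nonneg (E := E) (s := s)]

end Covers

theorem intCover_le_fracCover_const_general {V : Type*} [Fintype V] [DecidableEq V]
    (E : Finset (Finset V)) (s : ℕ) :
    IntCover E s ≤ 10.37 * FracCover E s + 1 := by
  linarith [intCover_le_four_mul_fracCover_add_one (E := E) (s := s),
    fracCover_nonneg (E := E) (s := s)]

/-- for every hypergraph and every `1 ≤ s ≤ |V|` with `|⋃ E| ≥ s`,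
`IntCover(G, s) ≤ 10.37 · FracCover(G, s) + 1`. -/
theorem intCover_le_fracCover_const {V : Type*} [Fintype V] [DecidableEq V]
    (E : Finset (Finset V)) (s : ℕ)
    (hs1 : 1 ≤ s) (hsV : s ≤ Fintype.card V)
    (hUnion : s ≤ (E.biUnion id).card) :
    IntCover E s ≤ 10.37 * FracCover E s + 1 :=
  intCover_le_fracCover_const_general E s
end

section
/- Let G = (V, E) be a hypergraph with V finite and E a finite set of subsets of V, and let 1 ≤ s ≤ |V|. Then the following two infima are equal: (i) the infimum of ∑_{e∈E} x_e over all x : E → ℝ with x_e ≥ 0 for which there exists w assigning a nonnegative real w_S to every S ⊆ V with |S| = s, such that ∑_S w_S ≥ 1 and, for every v ∈ V, ∑_{e∈E, v∈e} x_e ≥ ∑_{S ∋ v} w_S; and (ii) the infimum of ∑_{e∈E} x_e over all x : E → ℝ with x_e ≥ 0 for which there exists z : V → ℝ with 0 ≤ z_v ≤ 1 for all v, ∑_{v∈V} z_v ≥ s and, for every v ∈ V, ∑_{e∈E, v∈e} x_e ≥ z_v. -/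
/-!
Rescaling a feasible `w` to total weight `1`, or a feasible `z` to total `s`, only lowers the
left-hand sides of the covering constraints, so both programs have the same feasible `x` once
we know that the vertex marginals `v ↦ ∑_{S ∋ v} w_S` of the probability weightings of the
`s`-subsets are exactly the points of the hypersimplex `{z ∈ [0,1]^V | ∑ z = s}`. Marginals
clearly lie in the hypersimplex. Conversely, a point with a fractional coordinate has a second
one (the sum is an integer), and shifting mass between the two in either direction stays inside,
so the extreme points are the indicators of `s`-sets; by Krein–Milman every point is a convex
combination of them, i.e. a marginal.
-/

open Finset

theorem eq_zero_of_mem_extremePoints_of_add_mem_of_sub_mem {𝕜 E : Type*} [Field 𝕜]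
    [LinearOrder 𝕜] [IsStrictOrderedRing 𝕜] [AddCommGroup E] [Module 𝕜 E] {A : Set E}
    {x d : E} (hx : x ∈ A.extremePoints 𝕜) (hadd : x + d ∈ A) (hsub : x - d ∈ A) : d = 0 := by
  have hseg : x ∈ openSegment 𝕜 (x + d) (x - d) :=
    ⟨2⁻¹, 2⁻¹, by positivity, by positivity, by norm_num, by module⟩
  simpa using hx.2 hadd hsub hseg

theorem Finset.exists_nonneg_le_sum_eq_of_le_sum {ι 𝕜 : Type*} [Field 𝕜] [LinearOrder 𝕜]
    [IsStrictOrderedRing 𝕜] (A : Finset ι) {f : ι → 𝕜} (hf : ∀ i ∈ A, 0 ≤ f i) {t : 𝕜}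
    (ht₀ : 0 ≤ t) (ht : t ≤ ∑ i ∈ A, f i) :
    ∃ g : ι → 𝕜, (∀ i ∈ A, 0 ≤ g i ∧ g i ≤ f i) ∧ ∑ i ∈ A, g i = t := by
  have hr₀ : 0 ≤ t / ∑ i ∈ A, f i := div_nonneg ht₀ (ht₀.trans ht)
  have hr₁ : t / ∑ i ∈ A, f i ≤ 1 := div_le_one_of_le₀ ht (ht₀.trans ht)
  refine ⟨fun i => t / (∑ j ∈ A, f j) * f i, fun i hi => ⟨mul_nonneg hr₀ (hf i hi),
    mul_le_of_le_one_left (hf i hi) hr₁⟩, ?_⟩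
  rw [← mul_sum]
  exact div_mul_cancel_of_imp fun h => le_antisymm (h ▸ ht) ht₀

theorem Finset.sum_eq_card_filter_of_forall_eq_zero_or_eq_one {ι R : Type*}
    [AddCommMonoidWithOne R] (A : Finset ι) {f : ι → R} [DecidablePred (f · = 1)]
    (hf : ∀ i ∈ A, f i = 0 ∨ f i = 1) : ∑ i ∈ A, f i = #(A.filter (f · = 1)) := by
  rw [← sum_boole]
  refine sum_congr rfl fun i hi => ?_
  rcases hf i hi with h | h <;> simp [h]

theorem eq_zero_or_eq_one_of_mem_Icc_of_notMem_Ioo {R : Type*} [PartialOrder R] [Zero R] [One R]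
    [ZeroLEOneClass R] {x : R} (hIcc : x ∈ Set.Icc 0 1) (hIoo : x ∉ Set.Ioo 0 1) :
    x = 0 ∨ x = 1 := by
  have hx : x ∈ Set.Icc (0 : R) 1 \ Set.Ioo 0 1 := ⟨hIcc, hIoo⟩
  rwa [Set.Icc_sdiff_Ioo_same zero_le_one] at hx

def hypersimplex (V : Type*) [Fintype V] (s : ℕ) : Set (V → ℝ) :=
  {z | (∀ v, z v ∈ Set.Icc 0 1) ∧ ∑ v, z v = s}

def hypersimplexVertices (V : Type*) [DecidableEq V] (s : ℕ) : Set (V → ℝ) :=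
  (fun S : Finset V => fun v => if v ∈ S then (1 : ℝ) else 0) '' {S | #S = s}

section Hypersimplex

variable {V : Type*} [Fintype V] {s : ℕ}

theorem convex_hypersimplex : Convex ℝ (hypersimplex V s) := by
  rintro z ⟨hz, hzs⟩ y ⟨hy, hys⟩ a b ha hb hab
  refine ⟨fun v => ⟨?_, ?_⟩, ?_⟩
  · have := (hz v).1; have := (hy v).1
    simp only [Pi.add_apply, Pi.smul_apply, smul_eq_mul]; positivity
  · have := (hz v).2; have := (hy v).2
    simp only [Pi.add_apply, Pi.smul_apply, smul_eq_mul]; nlinarith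
  · simp only [Pi.add_apply, Pi.smul_apply, smul_eq_mul, sum_add_distrib, ← mul_sum, hzs, hys]
    rw [← add_mul, hab, one_mul]

theorem isCompact_hypersimplex : IsCompact (hypersimplex V s) := by
  have hcube : IsCompact (Set.univ.pi fun _ : V => Set.Icc (0 : ℝ) 1) :=
    isCompact_univ_pi fun _ => isCompact_Icc
  convert hcube.inter_right (isClosed_eq (continuous_finsetSum univ fun v _ => continuous_apply v)
    (continuous_const (y := (s : ℝ)))) using 1
  ext z
  simp only [hypersimplex, Set.mem_inter_iff, Set.mem_univ_pi, Set.mem_ofPred_eq]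

theorem add_smul_single_sub_single_mem_hypersimplex [DecidableEq V] {z : V → ℝ}
    (hz : z ∈ hypersimplex V s) {u v : V} (huv : u ≠ v) {δ : ℝ}
    (hu : z u + δ ∈ Set.Icc 0 1) (hv : z v - δ ∈ Set.Icc 0 1) :
    z + δ • (Pi.single u 1 - Pi.single v 1) ∈ hypersimplex V s := by
  refine ⟨fun t => ?_, ?_⟩
  · rcases eq_or_ne t u with rfl | htu
    · simpa [huv] using hu
    rcases eq_or_ne t v with rfl | htv
    · simpa [htu.symm, sub_eq_add_neg] using hv
    · simpa [htu, htv] using hz.1 t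
  · simp [sum_add_distrib, ← mul_sum, hz.2]

theorem exists_ne_mem_Ioo_of_mem_hypersimplex {z : V → ℝ} (hz : z ∈ hypersimplex V s) {u : V}
    (hu : z u ∈ Set.Ioo 0 1) : ∃ v ≠ u, z v ∈ Set.Ioo 0 1 := by
  classical
  by_contra! hother
  have h01 : ∀ v ∈ univ.erase u, z v = 0 ∨ z v = 1 := fun v hv =>
    eq_zero_or_eq_one_of_mem_Icc_of_notMem_Ioo (hz.1 v) (hother v (ne_of_mem_erase hv))
  have hsum := hz.2
  rw [← add_sum_erase _ _ (mem_univ u), sum_eq_card_filter_of_forall_eq_zero_or_eq_one _ h01]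
    at hsum
  obtain ⟨h0, h1⟩ := hu
  have hzu : z u = ((s - #((univ.erase u).filter (z · = 1)) : ℤ) : ℝ) := by push_cast; linarith
  rw [hzu] at h0 h1
  norm_cast at h0 h1
  omega

theorem notMem_extremePoints_hypersimplex [DecidableEq V] {z : V → ℝ}
    (hz : z ∈ hypersimplex V s) {u v : V} (huv : u ≠ v) (hu : z u ∈ Set.Ioo 0 1)
    (hv : z v ∈ Set.Ioo 0 1) : z ∉ (hypersimplex V s).extremePoints ℝ := by
  intro hext
  set ε := min (min (z u) (1 - z u)) (min (z v) (1 - z v))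
  have hε : 0 < ε := lt_min (lt_min hu.1 (sub_pos.2 hu.2)) (lt_min hv.1 (sub_pos.2 hv.2))
  have hεu : ε ≤ z u ∧ ε ≤ 1 - z u :=
    ⟨(min_le_left _ _).trans (min_le_left _ _), (min_le_left _ _).trans (min_le_right _ _)⟩
  have hεv : ε ≤ z v ∧ ε ≤ 1 - z v :=
    ⟨(min_le_right _ _).trans (min_le_left _ _), (min_le_right _ _).trans (min_le_right _ _)⟩
  have hadd := add_smul_single_sub_single_mem_hypersimplex hz huv (δ := ε)
    ⟨by linarith, by linarith⟩ ⟨by linarith, by linarith⟩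
  have hsub := add_smul_single_sub_single_mem_hypersimplex hz huv (δ := -ε)
    ⟨by linarith, by linarith⟩ ⟨by linarith, by linarith⟩
  rw [neg_smul, ← sub_eq_add_neg] at hsub
  have hzero := congrFun (eq_zero_of_mem_extremePoints_of_add_mem_of_sub_mem hext hadd hsub) u
  simp [huv, hε.ne'] at hzero

theorem extremePoints_hypersimplex_subset [DecidableEq V] :
    (hypersimplex V s).extremePoints ℝ ⊆ hypersimplexVertices V s := by
  intro z hz
  have hIoo : ∀ u, z u ∉ Set.Ioo 0 1 := fun u hu => by
    obtain ⟨v, hvu, hv⟩ := exists_ne_mem_Ioo_of_mem_hypersimplex hz.1 hu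
    exact notMem_extremePoints_hypersimplex hz.1 hvu.symm hu hv hz
  have h01 : ∀ v, z v = 0 ∨ z v = 1 := fun v =>
    eq_zero_or_eq_one_of_mem_Icc_of_notMem_Ioo (hz.1.1 v) (hIoo v)
  refine ⟨univ.filter (z · = 1), ?_, funext fun v => ?_⟩
  · have hsum := hz.1.2
    rw [sum_eq_card_filter_of_forall_eq_zero_or_eq_one _ fun v _ => h01 v] at hsum
    exact_mod_cast hsum
  · rcases h01 v with h | h <;> simp [h]

variable [DecidableEq V]

def marginal (s : ℕ) (w : Finset V → ℝ) (v : V) : ℝ :=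
  ∑ S ∈ (univ : Finset (Finset V)).filter (fun S => S.card = s ∧ v ∈ S), w S

variable (V s) in
def powersetCardSimplex : Set (Finset V → ℝ) :=
  {w | (∀ S : Finset V, S.card = s → 0 ≤ w S) ∧
    ∑ S ∈ (univ : Finset (Finset V)).filter (fun S => S.card = s), w S = 1}

theorem marginal_mono {w w' : Finset V → ℝ} (h : ∀ S : Finset V, S.card = s → w S ≤ w' S)
    (v : V) : marginal s w v ≤ marginal s w' v :=
  sum_le_sum fun S hS => h S (mem_filter.1 hS).2.1

theorem sum_marginal (w : Finset V → ℝ) :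
    ∑ v, marginal s w v =
      s * ∑ S ∈ (univ : Finset (Finset V)).filter (fun S => S.card = s), w S := by
  simp only [marginal, ← filter_filter, sum_filter (p := fun S => _ ∈ S)]
  rw [sum_comm, mul_sum]
  refine sum_congr rfl fun S hS => ?_
  rw [← sum_filter, sum_const, nsmul_eq_mul]
  simp [(mem_filter.1 hS).2]

theorem marginal_mem_hypersimplex {w : Finset V → ℝ} (hw : w ∈ powersetCardSimplex V s) :
    marginal s w ∈ hypersimplex V s := by
  refine ⟨fun v => ⟨sum_nonneg fun S hS => hw.1 S (mem_filter.1 hS).2.1, ?_⟩, ?_⟩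
  · rw [← hw.2]
    exact sum_le_sum_of_subset_of_nonneg
      (fun S hS => mem_filter.2 ⟨mem_univ S, (mem_filter.1 hS).2.1⟩)
      fun S hS _ => hw.1 S (mem_filter.1 hS).2
  · rw [sum_marginal, hw.2, mul_one]

theorem convex_image_marginal : Convex ℝ (marginal s '' powersetCardSimplex V s) := by
  refine Convex.is_linear_image ?_ ⟨fun w w' => ?_, fun c w => ?_⟩
  · rintro w ⟨hw, hw1⟩ w' ⟨hw', hw'1⟩ a b ha hb hab
    refine ⟨fun S hS => ?_, ?_⟩
    · have := hw S hS; have := hw' S hS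
      simp only [Pi.add_apply, Pi.smul_apply, smul_eq_mul]; positivity
    · simp only [Pi.add_apply, Pi.smul_apply, smul_eq_mul, sum_add_distrib, ← mul_sum, hw1, hw'1]
      rw [mul_one, mul_one, hab]
  · funext v; simp [marginal, sum_add_distrib]
  · funext v; simp [marginal, mul_sum]

theorem hypersimplexVertices_subset_image_marginal :
    hypersimplexVertices V s ⊆ marginal s '' powersetCardSimplex V s := by
  rintro _ ⟨S, hS : #S = s, rfl⟩
  refine ⟨fun T => if T = S then 1 else 0, ⟨fun T _ => by positivity, by simp [hS]⟩,
    funext fun v => ?_⟩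
  simp [marginal, hS]

theorem hypersimplex_subset_image_marginal :
    hypersimplex V s ⊆ marginal s '' powersetCardSimplex V s :=
  calc hypersimplex V s
      = closure (convexHull ℝ ((hypersimplex V s).extremePoints ℝ)) :=
        (closure_convexHull_extremePoints isCompact_hypersimplex convex_hypersimplex).symm
    _ ⊆ closure (convexHull ℝ (hypersimplexVertices V s)) :=
        closure_mono (convexHull_mono extremePoints_hypersimplex_subset)
    _ = convexHull ℝ (hypersimplexVertices V s) :=
        (((Set.toFinite _).image _).isClosed_convexHull ℝ).closure_eq
    _ ⊆ marginal s '' powersetCardSimplex V s :=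
        convexHull_min hypersimplexVertices_subset_image_marginal convex_image_marginal

end Hypersimplex

theorem lp_lb_eq_lp_primal_general {V : Type*} [Fintype V] [DecidableEq V]
    (E : Finset (Finset V)) (s : ℕ) :
    sInf {c : ℝ | ∃ x : Finset V → ℝ, (∀ e ∈ E, 0 ≤ x e) ∧
        (∃ w : Finset V → ℝ, (∀ S : Finset V, S.card = s → 0 ≤ w S) ∧
          1 ≤ ∑ S ∈ (Finset.univ : Finset (Finset V)).filter (fun S => S.card = s), w S ∧
          ∀ v : V,
            ∑ S ∈ (Finset.univ : Finset (Finset V)).filter (fun S => S.card = s ∧ v ∈ S), w S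
              ≤ ∑ e ∈ E.filter (fun e => v ∈ e), x e) ∧
        c = ∑ e ∈ E, x e} =
      sInf {c : ℝ | ∃ x : Finset V → ℝ, (∀ e ∈ E, 0 ≤ x e) ∧
        (∃ z : V → ℝ, (∀ v, 0 ≤ z v ∧ z v ≤ 1) ∧ (s : ℝ) ≤ ∑ v : V, z v ∧
          ∀ v : V, z v ≤ ∑ e ∈ E.filter (fun e => v ∈ e), x e) ∧
        c = ∑ e ∈ E, x e} := by
  congr 1
  ext c
  refine exists_congr fun x => and_congr_right fun _ => and_congr_left fun _ => ⟨?_, ?_⟩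
  · rintro ⟨w, hw₀, hw₁, hwx⟩
    obtain ⟨w', hw', hw'₁⟩ := exists_nonneg_le_sum_eq_of_le_sum _
      (fun S hS => hw₀ S (mem_filter.1 hS).2) zero_le_one hw₁
    have hw'S : ∀ S : Finset V, S.card = s → 0 ≤ w' S ∧ w' S ≤ w S :=
      fun S hS => hw' S (mem_filter.2 ⟨mem_univ S, hS⟩)
    have hmem := marginal_mem_hypersimplex (s := s) ⟨fun S hS => (hw'S S hS).1, hw'₁⟩
    exact ⟨marginal s w', hmem.1, hmem.2.ge,
      fun v => (marginal_mono (fun S hS => (hw'S S hS).2) v).trans (hwx v)⟩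
  · rintro ⟨z, hz, hzs, hzx⟩
    obtain ⟨z', hz', hz's⟩ :=
      exists_nonneg_le_sum_eq_of_le_sum univ (fun v _ => (hz v).1) s.cast_nonneg hzs
    obtain ⟨w, hw, hwz⟩ := hypersimplex_subset_image_marginal
      ⟨fun v => ⟨(hz' v (mem_univ v)).1, (hz' v (mem_univ v)).2.trans (hz v).2⟩, hz's⟩
    exact ⟨w, hw.1, hw.2.ge,
      fun v => (congrFun hwz v).le.trans ((hz' v (mem_univ v)).2.trans (hzx v))⟩

/-- the two linear programs — over weightings `w` of the `s`-element
subsets, and over capped vertex variables `z` — have equal optimal values. -/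
theorem lp_lb_eq_lp_primal {V : Type*} [Fintype V] [DecidableEq V]
    (E : Finset (Finset V)) (s : ℕ) (hs1 : 1 ≤ s) (hsV : s ≤ Fintype.card V) :
    sInf {c : ℝ | ∃ x : Finset V → ℝ, (∀ e ∈ E, 0 ≤ x e) ∧
        (∃ w : Finset V → ℝ, (∀ S : Finset V, S.card = s → 0 ≤ w S) ∧
          1 ≤ ∑ S ∈ (Finset.univ : Finset (Finset V)).filter (fun S => S.card = s), w S ∧
          ∀ v : V,
            ∑ S ∈ (Finset.univ : Finset (Finset V)).filter (fun S => S.card = s ∧ v ∈ S), w S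
              ≤ ∑ e ∈ E.filter (fun e => v ∈ e), x e) ∧
        c = ∑ e ∈ E, x e} =
      sInf {c : ℝ | ∃ x : Finset V → ℝ, (∀ e ∈ E, 0 ≤ x e) ∧
        (∃ z : V → ℝ, (∀ v, 0 ≤ z v ∧ z v ≤ 1) ∧ (s : ℝ) ≤ ∑ v : V, z v ∧
          ∀ v : V, z v ≤ ∑ e ∈ E.filter (fun e => v ∈ e), x e) ∧
        c = ∑ e ∈ E, x e} :=
  lp_lb_eq_lp_primal_general E s
end

section
/- Let G = (V, E) be a hypergraph with V finite and E a finite set of subsets of V whose union is V, let S ⊆ V, and let x : E → ℝ satisfy x_e ≥ 0 for every e ∈ E and ∑_{e∈E, v∈e} x_e ≥ 1 for every v ∈ S (a fractional edge cover of S). Then for every family of finite relations (R_e)_{e∈E}, where R_e is a finite set of functions e → ℕ, the number of tuples t : S → ℕ whose restriction to e ∩ S lies in the projection π_{e∩S}(R_e) for every e ∈ E is at most ∏_{e∈E} |R_e|^{x_e}. In particular, if |R_e| ≤ N for every e ∈ E, then the projected join on S has at most N^{∑_{e∈E} x_e} tuples, so PrjBnd(G, N, |S|) ≤ N raised to the optimal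 value of the fractional edge cover linear program for (G, S). -/
/-! The bound is the discrete Finner (generalized Hölder) inequality
`∑_{t ∈ B^S} ∏_e g_e(t)^{x_e} ≤ ∏_e (∑_{t ∈ B^{e ∩ S}} g_e(t))^{x_e}` for functions `g_e ≥ 0`
depending only on the coordinates in `e`, applied to the indicator of the tuples whose
restriction to `e ∩ S` lies in `π_{e ∩ S}(R_e)`; there are at most `|R_e|` such restrictions.
The inequality is proved by summing out one vertex `a ∈ S` at a time: the weights of the edges
through `a` add up to at least `1`, so Hölder's inequality bounds the sum over the value at `a`
by the product of the partial sums of the `g_e` with `a ∈ e`, and these are again functions of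
the coordinates in `e`, to which induction applies. -/

open Finset
open scoped ENNReal

namespace ENNReal

theorem sum_rpow_le_rpow_sum {ι : Type*} (s : Finset ι) (f : ι → ℝ≥0∞) {p : ℝ} (hp : 1 ≤ p) :
    ∑ i ∈ s, f i ^ p ≤ (∑ i ∈ s, f i) ^ p := by
  induction s using Finset.cons_induction with
  | empty => simp [zero_rpow_of_pos (zero_lt_one.trans_le hp)]
  | cons a s ha ih =>
    rw [sum_cons, sum_cons]
    exact (add_le_add_right ih _).trans (add_rpow_le_rpow_add _ _ hp)

theorem sum_prod_rpow_le_of_sum_eq_one {ι β : Type*} (s : Finset ι) (B : Finset β)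
    (f : ι → β → ℝ≥0∞) {p : ι → ℝ} (hp0 : ∀ i ∈ s, 0 ≤ p i) (hp : ∑ i ∈ s, p i = 1) :
    ∑ b ∈ B, ∏ i ∈ s, f i b ^ p i ≤ ∏ i ∈ s, (∑ b ∈ B, f i b) ^ p i := by
  let _ : MeasurableSpace B := ⊤
  have := lintegral_prod_norm_pow_le (μ := MeasureTheory.Measure.count) s
    (f := fun i (b : B) => f i b) (fun _ _ => Measurable.of_discrete.aemeasurable) hp hp0
  simp only [MeasureTheory.lintegral_fintype, MeasureTheory.Measure.count_singleton, mul_one,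
    sum_coe_sort] at this
  rwa [sum_coe_sort B (fun b => ∏ i ∈ s, f i b ^ p i)] at this

theorem sum_prod_rpow_le_of_one_le_sum {ι β : Type*} (s : Finset ι) (B : Finset β)
    (f : ι → β → ℝ≥0∞) {p : ι → ℝ} (hp0 : ∀ i ∈ s, 0 ≤ p i) (hp : 1 ≤ ∑ i ∈ s, p i) :
    ∑ b ∈ B, ∏ i ∈ s, f i b ^ p i ≤ ∏ i ∈ s, (∑ b ∈ B, f i b) ^ p i := by
  set σ := ∑ i ∈ s, p i
  have hσ : 0 < σ := zero_lt_one.trans_le hp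
  have hq0 : ∀ i ∈ s, 0 ≤ p i / σ := fun i hi => div_nonneg (hp0 i hi) hσ.le
  have hq : ∑ i ∈ s, p i / σ = 1 := by rw [← Finset.sum_div, div_self hσ.ne']
  have rescale : ∀ (y : ℝ≥0∞) (i : ι), (y ^ σ) ^ (p i / σ) = y ^ p i := fun y i => by
    rw [← rpow_mul, mul_div_cancel₀ _ hσ.ne']
  calc ∑ b ∈ B, ∏ i ∈ s, f i b ^ p i
      = ∑ b ∈ B, ∏ i ∈ s, (f i b ^ σ) ^ (p i / σ) := by simp only [rescale]
    _ ≤ ∏ i ∈ s, (∑ b ∈ B, f i b ^ σ) ^ (p i / σ) :=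
        sum_prod_rpow_le_of_sum_eq_one s B _ hq0 hq
    _ ≤ ∏ i ∈ s, ((∑ b ∈ B, f i b) ^ σ) ^ (p i / σ) :=
        prod_le_prod' fun i hi => rpow_le_rpow (sum_rpow_le_rpow_sum B _ hp) (hq0 i hi)
    _ = ∏ i ∈ s, (∑ b ∈ B, f i b) ^ p i := by simp only [rescale]

end ENNReal

section Finner

variable {V α : Type*} [DecidableEq V]

theorem sum_prod_rpow_update_le {E : Finset (Finset V)} {x : Finset V → ℝ}
    (hx0 : ∀ e ∈ E, 0 ≤ x e) {a : V} (ha : 1 ≤ ∑ e ∈ E.filter (fun e => a ∈ e), x e)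
    (B : Finset α) (g : Finset V → (V → α) → ℝ≥0∞) (hg : ∀ e ∈ E, DependsOn (g e) e)
    (t : V → α) :
    ∑ b ∈ B, ∏ e ∈ E, g e (Function.update t a b) ^ x e ≤
      ∏ e ∈ E, (if a ∈ e then ∑ b ∈ B, g e (Function.update t a b) else g e t) ^ x e := by
  have hfar : ∀ e ∈ E, a ∉ e → ∀ b, g e (Function.update t a b) = g e t := fun e he hae b =>
    hg e he fun v hv => Function.update_of_ne (ne_of_mem_of_not_mem hv hae) _ _
  calc ∑ b ∈ B, ∏ e ∈ E, g e (Function.update t a b) ^ x e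
      = (∑ b ∈ B, ∏ e ∈ E.filter (fun e => a ∈ e), g e (Function.update t a b) ^ x e) *
          ∏ e ∈ E.filter (fun e => a ∉ e), g e t ^ x e := by
        rw [sum_mul]
        refine sum_congr rfl fun b _ => ?_
        rw [← prod_filter_mul_prod_filter_not E (fun e => a ∈ e)]
        congr 1
        exact prod_congr rfl fun e he => by
          rw [mem_filter] at he
          rw [hfar e he.1 he.2]
    _ ≤ (∏ e ∈ E.filter (fun e => a ∈ e), (∑ b ∈ B, g e (Function.update t a b)) ^ x e) *
          ∏ e ∈ E.filter (fun e => a ∉ e), g e t ^ x e := by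
        gcongr
        exact ENNReal.sum_prod_rpow_le_of_one_le_sum _ B _
          (fun e he => hx0 e (mem_filter.1 he).1) ha
    _ = _ := by
        rw [← prod_filter_mul_prod_filter_not E (fun e => a ∈ e)]
        congr 1
        · exact prod_congr rfl fun e he => by simp [(mem_filter.1 he).2]
        · exact prod_congr rfl fun e he => by simp [(mem_filter.1 he).2]

variable [Fintype V] [Inhabited α]

def grid (S : Finset V) (B : Finset α) : Finset (V → α) :=
  Fintype.piFinset fun v => if v ∈ S then B else {default}

theorem mem_grid {S : Finset V} {B : Finset α} {t : V → α} :
    t ∈ grid S B ↔ ∀ v, (v ∈ S → t v ∈ B) ∧ (v ∉ S → t v = default) := by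
  simp only [grid, Fintype.mem_piFinset]
  refine forall_congr' fun v => ?_
  split_ifs with h <;> simp [h]

theorem grid_empty (B : Finset α) : grid (∅ : Finset V) B = {fun _ => default} := by
  ext t
  simp [mem_grid, funext_iff]

theorem sum_grid_insert {M : Type*} [AddCommMonoid M] {S : Finset V} {a : V} (ha : a ∉ S)
    (B : Finset α) (F : (V → α) → M) :
    ∑ t ∈ grid (insert a S) B, F t = ∑ t ∈ grid S B, ∑ b ∈ B, F (Function.update t a b) := by
  rw [← sum_product']
  refine sum_nbij' (fun t : V → α => (Function.update t a default, t a))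
    (fun p => Function.update p.1 a p.2) ?_ ?_ ?_ ?_ ?_
  · intro t ht
    simp only [mem_product, mem_grid, Function.update_apply] at ht ⊢
    grind
  · intro p hp
    simp only [mem_product, mem_grid, Function.update_apply] at hp ⊢
    grind
  · intro t _
    simp
  · intro p hp
    simp only [mem_product, mem_grid] at hp
    simp [← (hp.1 a).2 ha]
  · intro t _
    simp

theorem sum_grid_prod_rpow_le {E : Finset (Finset V)} {x : Finset V → ℝ}
    (hx0 : ∀ e ∈ E, 0 ≤ x e) (B : Finset α) {S : Finset V}
    (hcover : ∀ v ∈ S, 1 ≤ ∑ e ∈ E.filter (fun e => v ∈ e), x e)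
    (g : Finset V → (V → α) → ℝ≥0∞) (hg : ∀ e ∈ E, DependsOn (g e) e) :
    ∑ t ∈ grid S B, ∏ e ∈ E, g e t ^ x e ≤ ∏ e ∈ E, (∑ t ∈ grid (e ∩ S) B, g e t) ^ x e := by
  induction S using Finset.induction_on generalizing g with
  | empty => simp [grid_empty]
  | insert a S ha ih =>
    set g' : Finset V → (V → α) → ℝ≥0∞ := fun e t =>
      if a ∈ e then ∑ b ∈ B, g e (Function.update t a b) else g e t with hg'
    have hg'_dependsOn : ∀ e ∈ E, DependsOn (g' e) e := by
      intro e he t t' htt'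
      simp only [hg']
      split_ifs
      · exact sum_congr rfl fun b _ => hg e he fun v hv => by
          simp only [Function.update_apply, htt' v hv]
      · exact hg e he htt'
    have sum_g' : ∀ e, ∑ t ∈ grid (e ∩ S) B, g' e t = ∑ t ∈ grid (e ∩ insert a S) B, g e t := by
      intro e
      by_cases hae : a ∈ e
      · rw [inter_insert_of_mem hae, sum_grid_insert (fun h => ha (mem_inter.1 h).2)]
        simp [hg', hae]
      · rw [inter_insert_of_notMem hae]
        simp [hg', hae]
    calc ∑ t ∈ grid (insert a S) B, ∏ e ∈ E, g e t ^ x e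
        = ∑ t ∈ grid S B, ∑ b ∈ B, ∏ e ∈ E, g e (Function.update t a b) ^ x e :=
          sum_grid_insert ha B _
      _ ≤ ∑ t ∈ grid S B, ∏ e ∈ E, g' e t ^ x e := sum_le_sum fun t _ =>
          sum_prod_rpow_update_le hx0 (hcover a (mem_insert_self a S)) B g hg t
      _ ≤ ∏ e ∈ E, (∑ t ∈ grid (e ∩ S) B, g' e t) ^ x e :=
          ih (fun v hv => hcover v (mem_insert_of_mem hv)) g' hg'_dependsOn
      _ = ∏ e ∈ E, (∑ t ∈ grid (e ∩ insert a S) B, g e t) ^ x e := by simp only [sum_g']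

end Finner

section Relations

variable {V α : Type*}

def projPreimage (e S : Finset V) (Re : Finset ({v // v ∈ e} → α)) : Set (V → α) :=
  {t | ∃ r ∈ Re, ∀ v (hv : v ∈ e), v ∈ S → t v = r ⟨v, hv⟩}

theorem dependsOn_indicator_projPreimage (e S : Finset V) (Re : Finset ({v // v ∈ e} → α)) :
    DependsOn ((projPreimage e S Re).indicator (1 : (V → α) → ℝ≥0∞)) e := by
  intro t t' htt'
  have hiff : t ∈ projPreimage e S Re ↔ t' ∈ projPreimage e S Re := by
    simp only [projPreimage, Set.mem_ofPred_eq]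
    refine exists_congr fun r => and_congr_right fun _ => forall₂_congr fun v hv => ?_
    rw [htt' v hv]
  by_cases ht : t ∈ projPreimage e S Re
  · rw [Set.indicator_of_mem ht, Set.indicator_of_mem (hiff.1 ht), Pi.one_apply, Pi.one_apply]
  · rw [Set.indicator_of_notMem ht, Set.indicator_of_notMem (mt hiff.2 ht)]

variable [DecidableEq V] [Inhabited α]

def extendDefault (S : Finset V) (t : {v // v ∈ S} → α) : V → α :=
  fun v => if h : v ∈ S then t ⟨v, h⟩ else default

theorem extendDefault_injective (S : Finset V) :
    Function.Injective (extendDefault (α := α) S) := by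
  intro t t' h
  funext ⟨v, hv⟩
  simpa [extendDefault, hv] using congrFun h v

variable [Fintype V]

theorem sum_grid_indicator_projPreimage_le (e S : Finset V) (Re : Finset ({v // v ∈ e} → α))
    (B : Finset α) :
    ∑ t ∈ grid (e ∩ S) B, (projPreimage e S Re).indicator 1 t ≤ (Re.card : ℝ≥0∞) := by
  classical
  rw [sum_indicator_eq_sum_filter, Pi.one_def, sum_const, nsmul_one, Nat.cast_le]
  refine (card_le_card fun t ht => ?_).trans (card_image_le (f := fun r : {v // v ∈ e} → α =>
    extendDefault (e ∩ S) fun v => r ⟨v, (mem_inter.1 v.2).1⟩))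
  obtain ⟨ht, r, hr, htr⟩ := mem_filter.1 ht
  refine mem_image.2 ⟨r, hr, funext fun v => ?_⟩
  rw [mem_grid] at ht
  by_cases hv : v ∈ e ∩ S
  · simp [extendDefault, hv, htr v (mem_inter.1 hv).1 (mem_inter.1 hv).2]
  · simp [extendDefault, hv, (ht v).2 hv]

theorem ncard_projJoin_le_sum_grid (E : Finset (Finset V))
    (R : (e : Finset V) → Finset ({v // v ∈ e} → ℕ)) (S : Finset V)
    (hS : ∀ v ∈ S, ∃ e ∈ E, v ∈ e) (x : Finset V → ℝ) :
    ((ProjJoin E R S).ncard : ℝ≥0∞) ≤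
      ∑ t ∈ grid S (E.biUnion fun e => (R e).biUnion fun r => univ.image r),
        ∏ e ∈ E, (projPreimage e S (R e)).indicator 1 t ^ x e := by
  classical
  set B := E.biUnion fun e => (R e).biUnion fun r => univ.image r
  set joinGrid := (grid S B).filter fun t => ∀ e ∈ E, t ∈ projPreimage e S (R e)
  have hext : ∀ t ∈ ProjJoin E R S, extendDefault S t ∈ joinGrid := by
    intro t ht
    refine mem_filter.2 ⟨mem_grid.2 fun v => ⟨fun hv => ?_, fun hv => by simp [extendDefault, hv]⟩,
      fun e he => ?_⟩
    · obtain ⟨e, he, hve⟩ := hS v hv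
      obtain ⟨r, hr, htr⟩ := ht e he
      simp only [extendDefault, hv, dite_true, htr v hve hv, B, mem_biUnion, mem_image]
      exact ⟨e, he, r, hr, ⟨v, hve⟩, mem_univ _, rfl⟩
    · obtain ⟨r, hr, htr⟩ := ht e he
      exact ⟨r, hr, fun v hve hvS => by simp [extendDefault, hvS, htr v hve hvS]⟩
  calc ((ProjJoin E R S).ncard : ℝ≥0∞)
      ≤ joinGrid.card := by
        rw [Nat.cast_le, ← Set.ncard_coe_finset]
        exact Set.ncard_le_ncard_of_injOn _ hext (extendDefault_injective S).injOn
          joinGrid.finite_toSet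
    _ = ∑ t ∈ joinGrid, ∏ e ∈ E, (projPreimage e S (R e)).indicator 1 t ^ x e := by
        rw [card_eq_sum_ones, Nat.cast_sum, Nat.cast_one]
        refine sum_congr rfl fun t ht => (prod_eq_one fun e he => ?_).symm
        rw [Set.indicator_of_mem ((mem_filter.1 ht).2 e he), Pi.one_apply, ENNReal.one_rpow]
    _ ≤ _ := sum_le_sum_of_subset (filter_subset _ _)

theorem ncard_projJoin_le_prod_card_rpow (E : Finset (Finset V)) {x : Finset V → ℝ}
    (hx0 : ∀ e ∈ E, 0 ≤ x e) {S : Finset V}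
    (hcover : ∀ v ∈ S, 1 ≤ ∑ e ∈ E.filter (fun e => v ∈ e), x e)
    (R : (e : Finset V) → Finset ({v // v ∈ e} → ℕ)) :
    ((ProjJoin E R S).ncard : ℝ≥0∞) ≤ ∏ e ∈ E, ((R e).card : ℝ≥0∞) ^ x e := by
  have hS : ∀ v ∈ S, ∃ e ∈ E, v ∈ e := fun v hv => by
    obtain ⟨e, he, -⟩ := exists_ne_zero_of_sum_ne_zero (one_pos.trans_le (hcover v hv)).ne'
    exact ⟨e, (mem_filter.1 he).1, (mem_filter.1 he).2⟩
  calc ((ProjJoin E R S).ncard : ℝ≥0∞)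
      ≤ _ := ncard_projJoin_le_sum_grid E R S hS x
    _ ≤ ∏ e ∈ E, (∑ t ∈ grid (e ∩ S) _, (projPreimage e S (R e)).indicator 1 t) ^ x e :=
        sum_grid_prod_rpow_le hx0 _ hcover _ fun e _ => dependsOn_indicator_projPreimage e S (R e)
    _ ≤ ∏ e ∈ E, ((R e).card : ℝ≥0∞) ^ x e := prod_le_prod' fun e he =>
        ENNReal.rpow_le_rpow (sum_grid_indicator_projPreimage_le e S (R e) _) (hx0 e he)

end Relations

theorem projJoin_card_le_agm_general {V : Type*} [Fintype V] [DecidableEq V]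
    (E : Finset (Finset V))
    (S : Finset V) (x : Finset V → ℝ)
    (hx0 : ∀ e ∈ E, 0 ≤ x e)
    (hxcover : ∀ v ∈ S, 1 ≤ ∑ e ∈ E.filter (fun e => v ∈ e), x e)
    (R : (e : Finset V) → Finset ({v // v ∈ e} → ℕ)) :
    ((ProjJoin E R S).ncard : ℝ) ≤ ∏ e ∈ E, ((R e).card : ℝ) ^ (x e) ∧
      ∀ N : ℕ, 1 ≤ N → (∀ e ∈ E, (R e).card ≤ N) →
        ((ProjJoin E R S).ncard : ℝ) ≤ (N : ℝ) ^ (∑ e ∈ E, x e) := by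
  have hreal : ((ProjJoin E R S).ncard : ℝ) ≤ ∏ e ∈ E, ((R e).card : ℝ) ^ (x e) := by
    have := ENNReal.toReal_mono (ENNReal.prod_ne_top fun e he =>
      ENNReal.rpow_ne_top_of_nonneg (hx0 e he) (ENNReal.natCast_ne_top _))
      (ncard_projJoin_le_prod_card_rpow E hx0 hxcover R)
    simpa [ENNReal.toReal_prod, ← ENNReal.toReal_rpow] using this
  refine ⟨hreal, fun N _ hN => hreal.trans ?_⟩
  rw [Real.rpow_sum_of_nonneg N.cast_nonneg hx0]
  exact prod_le_prod (fun e _ => by positivity) fun e he =>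
    Real.rpow_le_rpow (Nat.cast_nonneg _) (Nat.cast_le.2 (hN e he)) (hx0 e he)

/-- AGM-style bound: if `x` is a fractional edge cover of `S`, then the
projected join on `S` has at most `∏_{e ∈ E} |R_e| ^ (x_e)` tuples; in particular if
`|R_e| ≤ N` for all `e`, then it has at most `N ^ (∑_{e ∈ E} x_e)` tuples. -/
theorem projJoin_card_le_agm {V : Type*} [Fintype V] [DecidableEq V]
    (E : Finset (Finset V)) (hE : ∀ v : V, ∃ e ∈ E, v ∈ e)
    (S : Finset V) (x : Finset V → ℝ)
    (hx0 : ∀ e ∈ E, 0 ≤ x e)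
    (hxcover : ∀ v ∈ S, 1 ≤ ∑ e ∈ E.filter (fun e => v ∈ e), x e)
    (R : (e : Finset V) → Finset ({v // v ∈ e} → ℕ)) :
    ((ProjJoin E R S).ncard : ℝ) ≤ ∏ e ∈ E, ((R e).card : ℝ) ^ (x e) ∧
      ∀ N : ℕ, 1 ≤ N → (∀ e ∈ E, (R e).card ≤ N) →
        ((ProjJoin E R S).ncard : ℝ) ≤ (N : ℝ) ^ (∑ e ∈ E, x e) :=
  projJoin_card_le_agm_general E S x hx0 hxcover R
end
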